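/- arXiv:1212.5302 — 6 statements merged into one kernel-verified Lean document; each statement's English description precedes it below -/
import Mathlib

section
/- Let (A1,B1,C1,D1) and (A2,B2,C2,D2) be Speh quadruples, and let m1 = m(A1,B1,C1,D1) and m2 = m(A2,B2,C2,D2) be the associated rectangular multisegments. Then there exist a segment Δ1 occurring in m1 and a segment Δ2 occurring in m2 that are juxtaposed (i.e. Δ1 ∩ Δ2 = ∅ and Δ1 ∪ Δ2 is an integer segment) if and only if Finset.Icc A1 C1 ∩ Finset.Icc (B2+1) (D2+1) ≠ ∅ or Finset.Icc (B1+1) (D1+1) ∩ Finset.Icc A2 C2 ≠ ∅. -/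
/-- A Speh quadruple: integers `A ≤ B`, `A ≤ C` with `A + D = B + C`. -/
def SpehQuad (A B C D : ℤ) : Prop := A ≤ B ∧ A ≤ C ∧ A + D = B + C

/-- The integer segment (as a finite set) associated to a pair `(b, e)`. -/
noncomputable def segSet (s : ℤ × ℤ) : Finset ℤ := Finset.Icc s.1 s.2

/-- A finite set of integers is a ℤ-segment if it equals `Finset.Icc x y` for some `x ≤ y`. -/
def IsZSegment (S : Finset ℤ) : Prop := ∃ x y : ℤ, x ≤ y ∧ S = Finset.Icc x y

/-- The rectangular multisegment `m(A,B,C,D)`: the segments `[A+j, B+j]` for `j = 0, …, C−A`.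
(Here `D = B + C − A` is determined by the other three entries.) -/
def rectMulti (A B C : ℤ) : Multiset (ℤ × ℤ) :=
  (Multiset.range (C - A + 1).toNat).map fun j => (A + (j : ℤ), B + (j : ℤ))

/-- A multiset of pairs represents a multisegment when each pair `(b,e)` satisfies `b ≤ e`. -/
def ValidMS (a : Multiset (ℤ × ℤ)) : Prop := ∀ s ∈ a, s.1 ≤ s.2

/-- Total number of points of a multisegment (used as fuel for the MW algorithm). -/
def msSize (a : Multiset (ℤ × ℤ)) : ℕ := (a.map fun s => (s.2 + 1 - s.1).toNat).sum

/-- Removing the last element of a segment: `[b,e] ↦ [b,e−1]`, omitted if empty. -/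
def truncate (s : ℤ × ℤ) : Multiset (ℤ × ℤ) :=
  if s.1 ≤ s.2 - 1 then {(s.1, s.2 - 1)} else 0

/-- Maximum of a multiset of integers (default `0` on the empty multiset). -/
def msMaxD (m : Multiset ℤ) : ℤ := WithBot.unbotD 0 m.toFinset.max

/-- The chain of stages of one step of the Mœglin–Waldspurger algorithm.
`chainAux fuel rem b e` looks in `rem` for a segment with end `e` and beginning `< b`,
of maximal beginning; if found, it is removed, its truncation is recorded, and the chain
continues with end `e − 1`.  Returns the number of segments chosen together with the
resulting multisegment (remaining segments plus truncations of chosen ones). -/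
def chainAux : ℕ → Multiset (ℤ × ℤ) → ℤ → ℤ → ℕ × Multiset (ℤ × ℤ)
  | 0, rem, _, _ => (0, rem)
  | n + 1, rem, b, e =>
    let S := rem.filter fun s => s.2 = e ∧ s.1 < b
    if S = 0 then (0, rem)
    else
      let b' := msMaxD (S.map Prod.fst)
      let r := chainAux n (rem.erase (b', e)) b' (e - 1)
      (r.1 + 1, truncate (b', e) + r.2)

/-- One step of the Mœglin–Waldspurger algorithm on a (nonempty) multisegment:
returns the segment `Γ = [x−k+1, x]` and the multisegment `a′`. -/
def mwaStep (a : Multiset (ℤ × ℤ)) : (ℤ × ℤ) × Multiset (ℤ × ℤ) :=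
  let x := msMaxD (a.map Prod.snd)
  let b1 := msMaxD ((a.filter fun s => s.2 = x).map Prod.fst)
  let r := chainAux a.card (a.erase (b1, x)) b1 (x - 1)
  ((x - r.1, x), truncate (b1, x) + r.2)

/-- The Mœglin–Waldspurger algorithm, with fuel. -/
def mwaAux : ℕ → Multiset (ℤ × ℤ) → Multiset (ℤ × ℤ)
  | 0, _ => 0
  | n + 1, a =>
    if a = 0 then 0
    else
      let r := mwaStep a
      r.1 ::ₘ mwaAux n r.2

/-- The Mœglin–Waldspurger algorithm, computing the Zelevinsky dual of a multisegment.
(The fuel `msSize a` suffices: each step strictly decreases the total number of points.) -/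
def MWA (a : Multiset (ℤ × ℤ)) : Multiset (ℤ × ℤ) := mwaAux (msSize a) a

/-- Two segments are linked if their union is a ℤ-segment different from both of them. -/
def Linked (s t : ℤ × ℤ) : Prop :=
  IsZSegment (segSet s ∪ segSet t) ∧ segSet s ∪ segSet t ≠ segSet s ∧
    segSet s ∪ segSet t ≠ segSet t

/-- The intersection of two linked segments, as a multisegment (empty if disjoint). -/
def segInterM (s t : ℤ × ℤ) : Multiset (ℤ × ℤ) :=
  if max s.1 t.1 ≤ min s.2 t.2 then {(max s.1 t.1, min s.2 t.2)} else 0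

/-- Elementary linking operation: `Prec c b` holds when `b` contains linked segments
`s, t` and `c` is obtained from `b` by replacing them with `s ∪ t` (and `s ∩ t` if nonempty). -/
def Prec (c b : Multiset (ℤ × ℤ)) : Prop :=
  ∃ s t rest, b = s ::ₘ t ::ₘ rest ∧ Linked s t ∧
    c = (min s.1 t.1, max s.2 t.2) ::ₘ (segInterM s t + rest)

/-- The linking (strict) order on multisegments. -/
def MLt : Multiset (ℤ × ℤ) → Multiset (ℤ × ℤ) → Prop := Relation.TransGen Prec

/-- Strong ordering of Speh quadruples. -/
def StrongLt (A1 B1 C1 D1 A2 B2 C2 D2 : ℤ) : Prop :=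
  A1 < A2 ∧ B1 < B2 ∧ C1 < C2 ∧ D1 < D2

/-- The set `I(A,B,C,D)` attached to a Speh quadruple. -/
def ISet (A B C D : ℤ) : Set ℤ := {z : ℤ | z ≤ A - 1} ∪ ↑(Finset.Icc (B + 1) (D + 1))

/-- Pattern: integers `i < j < k` with `i, k ∈ I \ J` and `j ∈ J \ I`. -/
def PPat (I J : Set ℤ) : Prop :=
  ∃ i j k : ℤ, i < j ∧ j < k ∧ i ∈ I \ J ∧ j ∈ J \ I ∧ k ∈ I \ J

/-- Reflection of a multisegment: `[b,e] ↦ [−e,−b]`. -/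
def reflMS (a : Multiset (ℤ × ℤ)) : Multiset (ℤ × ℤ) := a.map fun s => (-s.2, -s.1)

/-!
The segments of `m(A,B,C,D)` are the `[z, z + B - A]` with `z ∈ [A, C]`, so their ends fill
`[B, D]`. Two nonempty segments are juxtaposed exactly when one begins right after the other
ends, so `m1` and `m2` contain a juxtaposed pair iff a beginning of one of them lies in
(the ends of the other) `+ 1`.
-/

lemma mem_rectMulti_iff {A B C : ℤ} {s : ℤ × ℤ} :
    s ∈ rectMulti A B C ↔ s.1 ∈ Finset.Icc A C ∧ s.2 = s.1 + (B - A) := by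
  obtain ⟨b, e⟩ := s
  -- the cast `(j : ℤ)` in `rectMulti` is elaborated by lifting `Multiset.range _` to `Multiset ℤ`
  simp only [rectMulti, Multiset.pure_def, Multiset.bind_def, Multiset.bind_singleton,
    Multiset.map_map, Function.comp_apply, Multiset.mem_map, Multiset.mem_range, Prod.mk.injEq,
    Finset.mem_Icc]
  constructor
  · rintro ⟨j, hj, rfl, rfl⟩
    omega
  · rintro ⟨⟨hAb, hbC⟩, rfl⟩
    exact ⟨(b - A).toNat, by omega, by omega, by omega⟩

lemma segSet_juxtaposed_iff {s t : ℤ × ℤ} (hs : s.1 ≤ s.2) (ht : t.1 ≤ t.2) :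
    (segSet s ∩ segSet t = ∅ ∧ IsZSegment (segSet s ∪ segSet t)) ↔
      s.2 + 1 = t.1 ∨ t.2 + 1 = s.1 := by
  obtain ⟨a, b⟩ := s
  obtain ⟨c, d⟩ := t
  dsimp only [segSet, IsZSegment] at hs ht ⊢
  constructor
  · rintro ⟨hdisj, x, y, -, hunion⟩
    have mem_union (z : ℤ) : (a ≤ z ∧ z ≤ b ∨ c ≤ z ∧ z ≤ d) ↔ x ≤ z ∧ z ≤ y := by
      simpa only [Finset.mem_union, Finset.mem_Icc] using Finset.ext_iff.mp hunion z
    have not_mem_both (z : ℤ) : ¬((a ≤ z ∧ z ≤ b) ∧ c ≤ z ∧ z ≤ d) :=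
      fun hz => Finset.notMem_empty z <| hdisj ▸
        Finset.mem_inter.mpr ⟨Finset.mem_Icc.mpr hz.1, Finset.mem_Icc.mpr hz.2⟩
    -- the point just past the first segment lies in the union, hence starts the second one
    have := mem_union (b + 1); have := mem_union (d + 1)
    have := mem_union a; have := mem_union c
    have := not_mem_both a; have := not_mem_both c
    omega
  · rintro (h | h)
    · refine ⟨?_, a, d, by omega, ?_⟩ <;> ext z <;>
        simp only [Finset.mem_inter, Finset.mem_union, Finset.mem_Icc, Finset.notMem_empty,
          iff_false] <;> omega
    · refine ⟨?_, c, b, by omega, ?_⟩ <;> ext z <;>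
        simp only [Finset.mem_inter, Finset.mem_union, Finset.mem_Icc, Finset.notMem_empty,
          iff_false] <;> omega

lemma exists_rectMulti_end_add_one_eq_start_iff {A B C D A' B' C' : ℤ} (hD : A + D = B + C) :
    (∃ s ∈ rectMulti A B C, ∃ t ∈ rectMulti A' B' C', s.2 + 1 = t.1) ↔
      (Finset.Icc (B + 1) (D + 1) ∩ Finset.Icc A' C').Nonempty := by
  simp only [Finset.Nonempty, Finset.mem_inter, Finset.mem_Icc, Prod.exists, mem_rectMulti_iff]
  constructor
  · rintro ⟨b, e, ⟨⟨hAb, hbC⟩, rfl⟩, b', e', ⟨⟨hAb', hbC'⟩, -⟩, rfl⟩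
    exact ⟨b + (B - A) + 1, by omega⟩
  · rintro ⟨z, hz⟩
    exact ⟨z - 1 - (B - A), z - 1, by omega, z, z + (B' - A'), by omega, by omega⟩

theorem speh_contact_iff
    (A1 B1 C1 D1 A2 B2 C2 D2 : ℤ)
    (h1 : SpehQuad A1 B1 C1 D1) (h2 : SpehQuad A2 B2 C2 D2) :
    (∃ s1 ∈ rectMulti A1 B1 C1, ∃ s2 ∈ rectMulti A2 B2 C2,
      segSet s1 ∩ segSet s2 = ∅ ∧ IsZSegment (segSet s1 ∪ segSet s2)) ↔
    (Finset.Icc A1 C1 ∩ Finset.Icc (B2 + 1) (D2 + 1) ≠ ∅ ∨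
      Finset.Icc (B1 + 1) (D1 + 1) ∩ Finset.Icc A2 C2 ≠ ∅) := by
  obtain ⟨hAB1, -, hD1⟩ := h1
  obtain ⟨hAB2, -, hD2⟩ := h2
  have juxtaposed_iff {s1 s2} (hs1 : s1 ∈ rectMulti A1 B1 C1) (hs2 : s2 ∈ rectMulti A2 B2 C2) :
      (segSet s1 ∩ segSet s2 = ∅ ∧ IsZSegment (segSet s1 ∪ segSet s2)) ↔
        s2.2 + 1 = s1.1 ∨ s1.2 + 1 = s2.1 := by
    rw [mem_rectMulti_iff] at hs1 hs2
    rw [segSet_juxtaposed_iff (by omega) (by omega), or_comm]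
  simp only [← Finset.nonempty_iff_ne_empty]
  rw [Finset.inter_comm, ← exists_rectMulti_end_add_one_eq_start_iff hD2,
    ← exists_rectMulti_end_add_one_eq_start_iff hD1]
  constructor
  · rintro ⟨s1, hs1, s2, hs2, hjux⟩
    exact ((juxtaposed_iff hs1 hs2).mp hjux).imp (fun h => ⟨s2, hs2, s1, hs1, h⟩)
      (fun h => ⟨s1, hs1, s2, hs2, h⟩)
  · rintro (⟨s2, hs2, s1, hs1, h⟩ | ⟨s1, hs1, s2, hs2, h⟩)
    · exact ⟨s1, hs1, s2, hs2, (juxtaposed_iff hs1 hs2).mpr (Or.inl h)⟩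
    · exact ⟨s1, hs1, s2, hs2, (juxtaposed_iff hs1 hs2).mpr (Or.inr h)⟩
end

section
/- Let M1 = (A1,B1,C1,D1) and M2 = (A2,B2,C2,D2) be Speh quadruples with B1 < D1 (equivalently A1 < C1). Assume: (1) it is not the case that [Finset.Icc A1 D1 ∪ Finset.Icc A2 D2 is a ℤ-segment and (M1 <strong M2 or M2 <strong M1)]; (2) C2 + D2 ≤ C1 + D1; (3) if C2 + D2 = C1 + D1 then 1 ≤ D1 − B1 and D1 − B1 ≤ D2 − B2. Set M1' = (A1, B1, C1−1, D1−1), again a Speh quadruple. Then it is not the case that [Finset.Icc A1 (D1−1) ∪ Finset.Icc A2 D2 is a ℤ-segment and (M1' <strong M2 or M2 <strong M1')]. -/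
/-!
Shrinking `M1` to `M1'` lowers `C1` and `D1` by one. If `M1' <strong M2`, then `C1 + D1 ≤ C2 + D2`,
so the sums agree and `C1 = C2`, `D1 = D2`; the tie-breaking condition then forces `B2 ≤ B1`,
which is absurd. If `M2 <strong M1'`, then also `M2 <strong M1`, and two nonempty segments form a
ℤ-segment exactly when each starts at most one past the end of the other, a condition that only
gets weaker when `D1 - 1` is replaced by `D1`; this contradicts the irreducibility of `(M1, M2)`.
-/

theorem SpehQuad.le_end {A B C D : ℤ} (h : SpehQuad A B C D) : A ≤ D := by
  obtain ⟨hAB, hAC, hsum⟩ := h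
  omega

theorem isZSegment_Icc_union_Icc_iff {a b c d : ℤ} (hab : a ≤ b) (hcd : c ≤ d) :
    IsZSegment (Finset.Icc a b ∪ Finset.Icc c d) ↔ a ≤ d + 1 ∧ c ≤ b + 1 := by
  constructor
  · rintro ⟨x, y, -, hxy⟩
    have mem : ∀ z, (a ≤ z ∧ z ≤ b) ∨ (c ≤ z ∧ z ≤ d) ↔ x ≤ z ∧ z ≤ y := fun z => by
      simpa only [Finset.mem_union, Finset.mem_Icc] using Finset.ext_iff.mp hxy z
    have ha := (mem a).mp (by omega)
    have hb := (mem b).mp (by omega)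
    have hc := (mem c).mp (by omega)
    have hd := (mem d).mp (by omega)
    constructor
    · by_contra! h
      have := (mem (d + 1)).mpr (by omega)
      omega
    · by_contra! h
      have := (mem (b + 1)).mpr (by omega)
      omega
  · rintro ⟨had, hcb⟩
    refine ⟨min a c, max b d, by omega, ?_⟩
    ext z
    simp only [Finset.mem_union, Finset.mem_Icc]
    omega

theorem isZSegment_Icc_union_Icc_of_pred {a b c d : ℤ} (hab : a ≤ b - 1) (hcd : c ≤ d)
    (h : IsZSegment (Finset.Icc a (b - 1) ∪ Finset.Icc c d)) :
    IsZSegment (Finset.Icc a b ∪ Finset.Icc c d) := by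
  rw [isZSegment_Icc_union_Icc_iff hab hcd] at h
  rw [isZSegment_Icc_union_Icc_iff (by omega) hcd]
  omega

theorem StrongLt.of_pred {A1 B1 C1 D1 A2 B2 C2 D2 : ℤ}
    (h : StrongLt A2 B2 C2 D2 A1 B1 (C1 - 1) (D1 - 1)) : StrongLt A2 B2 C2 D2 A1 B1 C1 D1 := by
  obtain ⟨hA, hB, hC, hD⟩ := h
  exact ⟨hA, hB, by omega, by omega⟩

theorem not_strongLt_pred_of_sum_le {A1 B1 C1 D1 A2 B2 C2 D2 : ℤ} (hCD : C2 + D2 ≤ C1 + D1)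
    (hEq : C2 + D2 = C1 + D1 → D1 - B1 ≤ D2 - B2) :
    ¬ StrongLt A1 B1 (C1 - 1) (D1 - 1) A2 B2 C2 D2 := by
  rintro ⟨-, hB, hC, hD⟩
  have := hEq (by omega)
  omega

theorem irreducibility_preserved_by_shrinking
    (A1 B1 C1 D1 A2 B2 C2 D2 : ℤ)
    (h1 : SpehQuad A1 B1 C1 D1) (h2 : SpehQuad A2 B2 C2 D2)
    (hBD : B1 < D1)
    (hirr : ¬ (IsZSegment (Finset.Icc A1 D1 ∪ Finset.Icc A2 D2) ∧
      (StrongLt A1 B1 C1 D1 A2 B2 C2 D2 ∨ StrongLt A2 B2 C2 D2 A1 B1 C1 D1)))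
    (hCD : C2 + D2 ≤ C1 + D1)
    (hEq : C2 + D2 = C1 + D1 → 1 ≤ D1 - B1 ∧ D1 - B1 ≤ D2 - B2) :
    ¬ (IsZSegment (Finset.Icc A1 (D1 - 1) ∪ Finset.Icc A2 D2) ∧
      (StrongLt A1 B1 (C1 - 1) (D1 - 1) A2 B2 C2 D2 ∨
        StrongLt A2 B2 C2 D2 A1 B1 (C1 - 1) (D1 - 1))) := by
  rintro ⟨hseg, hlt | hlt⟩
  · exact not_strongLt_pred_of_sum_le hCD (fun h => (hEq h).2) hlt
  · have hA1 : A1 ≤ D1 - 1 := by linarith [h1.1]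
    exact hirr ⟨isZSegment_Icc_union_Icc_of_pred hA1 h2.le_end hseg, Or.inr hlt.of_pred⟩
end

section
/- Let (A,B,C,D) be a Speh quadruple. Then MWA(m(A,B,C,D)) = m(A,C,B,D); that is, the Zelevinsky dual of the rectangular multisegment consisting of the C−A+1 segments [A,B], [A+1,B+1], …, [C,D] is the rectangular multisegment consisting of the B−A+1 segments [A,C], [A+1,C+1], …, [B,D]. -/
/-!
In `m(A,B,C,D)` the segment `[C,D]` is the only one with maximal end, and below it the segments
`[C−1,D−1], …, [A,B]` each begin one step earlier and end one step lower, so the first step of the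
algorithm picks all `C−A+1` of them: `Γ = [B,D]` and `a′ = m(A,B−1,C,D−1)` (empty when `A = B`).
Induction on `B − A` then produces the segments `[B,D], [B−1,D−1], …, [A,C]` of `m(A,C,B,D)`.
-/

lemma msMaxD_eq_of_mem {m : Multiset ℤ} {a : ℤ} (ha : a ∈ m) (h : ∀ b ∈ m, b ≤ a) :
    msMaxD m = a := by
  have hmax : m.toFinset.max = (a : WithBot ℤ) :=
    le_antisymm
      (Finset.max_le fun b hb => WithBot.coe_le_coe.2 (h b (Multiset.mem_toFinset.1 hb)))
      (Finset.le_max (Multiset.mem_toFinset.2 ha))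
  simp [msMaxD, hmax]

lemma msMaxD_singleton (a : ℤ) : msMaxD {a} = a :=
  msMaxD_eq_of_mem (Multiset.mem_singleton_self a) (by simp)

lemma mwaAux_zero_right (n : ℕ) : mwaAux n 0 = 0 := by
  cases n <;> simp [mwaAux]

section rectMulti

variable {A B C : ℤ}

/-- `rectMulti` elaborates with a monadic coercion of `Multiset.range` into `Multiset ℤ`. -/
lemma rectMulti_eq_map_range :
    rectMulti A B C = (Multiset.range (C - A + 1).toNat).map fun j : ℕ => (A + j, B + j) := by
  simp [rectMulti, Bind.bind, Pure.pure, Multiset.bind_singleton, Multiset.map_map]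

lemma mem_rectMulti {s : ℤ × ℤ} :
    s ∈ rectMulti A B C ↔ ∃ j : ℤ, 0 ≤ j ∧ j ≤ C - A ∧ s = (A + j, B + j) := by
  simp only [rectMulti_eq_map_range, Multiset.mem_map, Multiset.mem_range]
  constructor
  · rintro ⟨j, hj, rfl⟩
    exact ⟨j, Int.natCast_nonneg j, by omega, rfl⟩
  · rintro ⟨j, hj₀, hj, rfl⟩
    exact ⟨j.toNat, by omega, by rw [Int.toNat_of_nonneg hj₀]⟩

lemma rectMulti_of_lt (h : C < A) : rectMulti A B C = 0 := by
  simp [rectMulti_eq_map_range, show (C - A + 1).toNat = 0 by omega]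

lemma rectMulti_eq_cons (h : A ≤ C) :
    rectMulti A B C = (C, B + (C - A)) ::ₘ rectMulti A B (C - 1) := by
  have hcard : (C - A + 1).toNat = (C - 1 - A + 1).toNat + 1 := by omega
  have hlast : ((C - 1 - A + 1).toNat : ℤ) = C - A := by omega
  rw [rectMulti_eq_map_range, hcard, Multiset.range_succ, Multiset.map_cons, hlast, add_sub_cancel,
    rectMulti_eq_map_range]

lemma card_rectMulti : Multiset.card (rectMulti A B C) = (C - A + 1).toNat := by
  simp [rectMulti_eq_map_range]

lemma msSize_rectMulti :
    msSize (rectMulti A B C) = (C - A + 1).toNat * (B - A + 1).toNat := by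
  have hlen : ∀ j : ℤ, (B + j + 1 - (A + j)).toNat = (B - A + 1).toNat := fun j => by
    congr 1; ring
  simp only [msSize, rectMulti_eq_map_range, Multiset.map_map, Function.comp_def, hlen,
    Multiset.map_const', Multiset.sum_replicate, Multiset.card_range, smul_eq_mul]

lemma msMaxD_map_snd_rectMulti (h : A ≤ C) :
    msMaxD ((rectMulti A B C).map Prod.snd) = B + (C - A) := by
  refine msMaxD_eq_of_mem ?_ ?_
  · rw [rectMulti_eq_cons h, Multiset.map_cons]
    exact Multiset.mem_cons_self _ _
  · simp only [Multiset.mem_map]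
    rintro _ ⟨s, hs, rfl⟩
    obtain ⟨j, -, hj, rfl⟩ := mem_rectMulti.1 hs
    simp only
    omega

lemma filter_rectMulti_eq_top {p : ℤ × ℤ → Prop} [DecidablePred p] (h : A ≤ C)
    (htop : p (C, B + (C - A))) (hp : ∀ s, p s → s.2 = B + (C - A)) :
    (rectMulti A B C).filter p = {(C, B + (C - A))} := by
  rw [rectMulti_eq_cons h, Multiset.filter_cons_of_pos _ htop, Multiset.filter_eq_nil.2]
  · rfl
  · intro s hs hps
    obtain ⟨j, -, hj, rfl⟩ := mem_rectMulti.1 hs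
    have := hp _ hps
    simp only at this
    omega

lemma bind_truncate_rectMulti :
    (rectMulti A B C).bind truncate = if A < B then rectMulti A (B - 1) C else 0 := by
  split_ifs with hAB
  · calc (rectMulti A B C).bind truncate
          = (rectMulti A B C).bind fun s => {(s.1, s.2 - 1)} := by
            refine Multiset.bind_congr fun s hs => ?_
            obtain ⟨j, -, -, rfl⟩ := mem_rectMulti.1 hs
            rw [truncate, if_pos (by simp only; omega)]
        _ = rectMulti A (B - 1) C := by
            simp only [Multiset.bind_singleton, rectMulti_eq_map_range, Multiset.map_map,
              Function.comp_def]
            congr! 2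
            ring
  · calc (rectMulti A B C).bind truncate = (rectMulti A B C).bind fun _ => 0 := by
            refine Multiset.bind_congr fun s hs => ?_
            obtain ⟨j, -, -, rfl⟩ := mem_rectMulti.1 hs
            rw [truncate, if_neg (by simp only; omega)]
        _ = 0 := Multiset.bind_zero _

lemma chainAux_rectMulti {n : ℕ} (hn : (C - A + 1).toNat ≤ n) :
    chainAux n (rectMulti A B C) (C + 1) (B + (C - A)) =
      ((C - A + 1).toNat, (rectMulti A B C).bind truncate) := by
  induction n generalizing C with
  | zero =>
    rw [rectMulti_of_lt (by omega), chainAux, show (C - A + 1).toNat = 0 by omega,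
      Multiset.zero_bind]
  | succ n ih =>
    rcases lt_or_ge C A with hCA | hAC
    · rw [rectMulti_of_lt hCA, show (C - A + 1).toNat = 0 by omega]
      simp [chainAux]
    have hrest := ih (C := C - 1) (by omega)
    rw [sub_add_cancel, show B + (C - 1 - A) = B + (C - A) - 1 by ring] at hrest
    have hfilter := filter_rectMulti_eq_top (B := B)
      (p := fun s => s.2 = B + (C - A) ∧ s.1 < C + 1) hAC ⟨rfl, by omega⟩ fun _ hs => hs.1
    simp only [chainAux, hfilter, Multiset.singleton_ne_zero, if_false, Multiset.map_singleton,
      msMaxD_singleton]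
    rw [rectMulti_eq_cons hAC, Multiset.erase_cons_head, hrest, Multiset.cons_bind]
    congr 1
    omega

lemma mwaStep_rectMulti (h : A ≤ C) :
    mwaStep (rectMulti A B C) = ((B, B + (C - A)), (rectMulti A B C).bind truncate) := by
  have hfilter := filter_rectMulti_eq_top (B := B) (p := fun s => s.2 = B + (C - A)) h rfl
    fun _ hs => hs
  have hchain := chainAux_rectMulti (A := A) (B := B) (C := C - 1) (n := (C - A + 1).toNat)
    (by omega)
  rw [sub_add_cancel, show B + (C - 1 - A) = B + (C - A) - 1 by ring] at hchain
  simp only [mwaStep, msMaxD_map_snd_rectMulti h, hfilter, Multiset.map_singleton,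
    msMaxD_singleton, card_rectMulti]
  rw [rectMulti_eq_cons h, Multiset.erase_cons_head, hchain, Multiset.cons_bind]
  congr 2
  omega

lemma mwaAux_rectMulti {n : ℕ} (hAB : A ≤ B) (hAC : A ≤ C) (hn : (B - A).toNat < n) :
    mwaAux n (rectMulti A B C) = rectMulti A C B := by
  induction n generalizing B with
  | zero => omega
  | succ n ih =>
    rw [mwaAux, if_neg (by rw [rectMulti_eq_cons hAC]; exact Multiset.cons_ne_zero),
      mwaStep_rectMulti hAC, bind_truncate_rectMulti, rectMulti_eq_cons (B := C) hAB]
    dsimp only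
    split_ifs with hlt
    · rw [ih (B := B - 1) (by omega) (by omega)]
      congr 2
      ring
    · rw [mwaAux_zero_right, rectMulti_of_lt (by omega)]
      congr 2
      ring

end rectMulti

theorem mwa_rectangular
    (A B C D : ℤ) (h : SpehQuad A B C D) :
    MWA (rectMulti A B C) = rectMulti A C B := by
  obtain ⟨hAB, hAC, -⟩ := h
  refine mwaAux_rectMulti hAB hAC ?_
  rw [msSize_rectMulti]
  calc (B - A).toNat < (B - A + 1).toNat := by omega
    _ ≤ (C - A + 1).toNat * (B - A + 1).toNat := Nat.le_mul_of_pos_left _ (by omega)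
end

section
/- Let (A1,B1,C1,D1) and (A2,B2,C2,D2) be Speh quadruples with A1 ≤ A2 and D2 ≤ D1 (so that the support Icc A2 D2 of the second is contained in the support Icc A1 D1 of the first). Then MWA(m1 + m2) = MWA(m1) + MWA(m2), where m_i = m(A_i,B_i,C_i,D_i) and + denotes multiset sum. -/
/-!
One MW step on a rectangle `m(A,B,C,D)` takes its whole top diagonal: it produces `Γ = [B, D]`
and leaves the rectangle with `B` lowered by one. For two rectangles with nested supports a step
either peels one rectangle in this way without touching the other, or (when `D₁ = D₂`, the second
rectangle is thinner and `B₁ < B₂`) its chain runs through the second rectangle and then down the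
lower part of the first; the next step consumes the remaining upper part of the first, and the two
steps produce exactly `[B₁, D]` and `[B₂, D]`, the first steps on the two rectangles separately.
Induction on `(B₁ - A₁) + (B₂ - A₂)` concludes; peeling the first rectangle lowers `D₁` by one,
so the invariant `D₂ ≤ D₁` has to be relaxed to allow `D₂ = D₁ + 1` when the first rectangle is
thinner.
-/

namespace SpehMWA

open Multiset

def rectN (A B : ℤ) (t : ℕ) : Multiset (ℤ × ℤ) :=
  (range t).map fun j : ℕ => (A + (j : ℤ), B + (j : ℤ))

def truncAll (a : Multiset (ℤ × ℤ)) : Multiset (ℤ × ℤ) := a.bind truncate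

lemma rectMulti_eq_rectN (A B C : ℤ) : rectMulti A B C = rectN A B (C - A + 1).toNat := by
  simp [rectMulti, rectN, map_map]

lemma rectN_succ (A B : ℤ) (t : ℕ) :
    rectN A B (t + 1) = (A + t, B + t) ::ₘ rectN A B t := by
  simp [rectN, range_succ]

lemma mem_rectN {A B : ℤ} {t : ℕ} {s : ℤ × ℤ} :
    s ∈ rectN A B t ↔ ∃ j : ℕ, j < t ∧ (A + j, B + j) = s := by
  simp [rectN]

lemma forall_mem_rectN {A B : ℤ} {t : ℕ} {p : ℤ × ℤ → Prop} :
    (∀ s ∈ rectN A B t, p s) ↔ ∀ j : ℕ, j < t → p (A + j, B + j) := by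
  simp [rectN]

lemma rectN_add (A B : ℤ) (u v : ℕ) :
    rectN A B (u + v) = rectN A B u + rectN (A + u) (B + u) v := by
  induction v with
  | zero => simp [rectN]
  | succ v ih =>
    rw [← add_assoc, rectN_succ, ih, rectN_succ, add_cons]
    push_cast
    ring_nf

lemma rectN_succ_add (A B : ℤ) (u v : ℕ) :
    rectN A B (u + 1 + v) = rectN A B (u + 1) + rectN (A + u + 1) (B + u + 1) v := by
  rw [rectN_add]
  push_cast
  simp only [add_assoc]

lemma card_rectN (A B : ℤ) (t : ℕ) : card (rectN A B t) = t := by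
  simp [rectN]

lemma truncAll_add (a b : Multiset (ℤ × ℤ)) : truncAll (a + b) = truncAll a + truncAll b :=
  add_bind _ _ _

lemma truncAll_cons (s : ℤ × ℤ) (a : Multiset (ℤ × ℤ)) :
    truncAll (s ::ₘ a) = truncate s + truncAll a :=
  cons_bind _ _ _

lemma truncAll_rectN_of_lt {A B : ℤ} (h : A < B) (t : ℕ) :
    truncAll (rectN A B t) = rectN A (B - 1) t := by
  induction t with
  | zero => rfl
  | succ t ih =>
    rw [rectN_succ, truncAll_cons, ih, rectN_succ, truncate, if_pos (by simp only; omega),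
      singleton_add]
    congr 1
    ext
    · rfl
    · simp only; ring

lemma truncAll_rectN_of_le {A B : ℤ} (h : B ≤ A) (t : ℕ) : truncAll (rectN A B t) = 0 := by
  induction t with
  | zero => rfl
  | succ t ih => rw [rectN_succ, truncAll_cons, ih, truncate, if_neg (by simp only; omega),
      add_zero]

lemma truncAll_rectN_le (A B : ℤ) (t : ℕ) : truncAll (rectN A B t) ≤ rectN A (B - 1) t := by
  rcases lt_or_ge A B with h | h
  · rw [truncAll_rectN_of_lt h]
  · rw [truncAll_rectN_of_le h]
    exact zero_le _

lemma validMS_add {a b : Multiset (ℤ × ℤ)} (ha : ValidMS a) (hb : ValidMS b) :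
    ValidMS (a + b) := by
  intro s hs
  rcases mem_add.1 hs with h | h
  exacts [ha s h, hb s h]

lemma validMS_of_le {a b : Multiset (ℤ × ℤ)} (h : a ≤ b) (hb : ValidMS b) : ValidMS a :=
  fun s hs => hb s (mem_of_le h hs)

lemma validMS_rectN {A B : ℤ} (h : A ≤ B) (t : ℕ) : ValidMS (rectN A B t) :=
  forall_mem_rectN.2 fun _ _ => by simp only; omega

lemma validMS_truncAll (a : Multiset (ℤ × ℤ)) : ValidMS (truncAll a) := by
  intro s hs
  obtain ⟨r, -, hr⟩ := mem_bind.1 hs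
  unfold truncate at hr
  split_ifs at hr with h
  · rw [mem_singleton.1 hr]; exact h
  · simp at hr

lemma msSize_add (a b : Multiset (ℤ × ℤ)) : msSize (a + b) = msSize a + msSize b := by
  simp [msSize]

lemma msSize_cons (s : ℤ × ℤ) (a : Multiset (ℤ × ℤ)) :
    msSize (s ::ₘ a) = (s.2 + 1 - s.1).toNat + msSize a := by
  simp [msSize]

lemma eq_zero_of_msSize_eq_zero {a : Multiset (ℤ × ℤ)} (hval : ValidMS a)
    (h : msSize a = 0) : a = 0 := by
  by_contra ha
  obtain ⟨s, hs⟩ := exists_mem_of_ne_zero ha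
  rw [← cons_erase hs, msSize_cons] at h
  have := hval s hs
  omega

lemma msSize_truncAll_add_card {c : Multiset (ℤ × ℤ)} (hc : ValidMS c) :
    msSize (truncAll c) + card c = msSize c := by
  induction c using Multiset.induction_on with
  | empty => rfl
  | cons s c ih =>
    have hs := hc s (mem_cons_self s c)
    rw [truncAll_cons, msSize_add, msSize_cons, card_cons,
      ← ih (validMS_of_le (le_cons_self c s) hc), truncate]
    split_ifs with h
    · simp only [msSize, map_singleton, sum_singleton]; omega
    · simp only [msSize, map_zero, sum_zero]; omega

lemma msSize_truncAll_add_sub_lt {a c : Multiset (ℤ × ℤ)} (ha : ValidMS a) (hca : c ≤ a)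
    (hc : c ≠ 0) : msSize (truncAll c + (a - c)) < msSize a := by
  have hsize := msSize_truncAll_add_card (validMS_of_le hca ha)
  have hcard : 0 < card c := card_pos.2 hc
  calc msSize (truncAll c + (a - c)) = msSize (truncAll c) + msSize (a - c) := msSize_add _ _
    _ < msSize c + msSize (a - c) := by omega
    _ = msSize a := by rw [← msSize_add, add_tsub_cancel_of_le hca]

lemma msMaxD_eq_of_mem {m : Multiset ℤ} {x : ℤ} (hx : x ∈ m) (hb : ∀ y ∈ m, y ≤ x) :
    msMaxD m = x := by
  have h : m.toFinset.max = (x : WithBot ℤ) :=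
    le_antisymm (Finset.max_le fun y hy => WithBot.coe_le_coe.2 (hb y (mem_toFinset.1 hy)))
      (Finset.le_max (mem_toFinset.2 hx))
  rw [msMaxD, h]
  rfl

lemma chainAux_of_forall_le (n : ℕ) (rem : Multiset (ℤ × ℤ)) (b e : ℤ)
    (h : ∀ s ∈ rem, s.2 = e → b ≤ s.1) : chainAux n rem b e = (0, rem) := by
  cases n with
  | zero => rfl
  | succ n =>
    rw [chainAux, if_pos (filter_eq_nil.2 fun s hs ⟨he, hb⟩ => (h s hs he).not_gt hb)]

lemma chainAux_succ_of_isMax (n : ℕ) (rem : Multiset (ℤ × ℤ)) (b e : ℤ) {v : ℤ × ℤ}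
    (hv : v ∈ rem) (hve : v.2 = e) (hvb : v.1 < b)
    (hmax : ∀ s ∈ rem, s.2 = e → s.1 < b → s.1 ≤ v.1) :
    chainAux (n + 1) rem b e =
      ((chainAux n (rem.erase v) v.1 (e - 1)).1 + 1,
        truncate v + (chainAux n (rem.erase v) v.1 (e - 1)).2) := by
  have hvS : v ∈ rem.filter fun s => s.2 = e ∧ s.1 < b := mem_filter.2 ⟨hv, hve, hvb⟩
  have hb' : msMaxD ((rem.filter fun s => s.2 = e ∧ s.1 < b).map Prod.fst) = v.1 := by
    refine msMaxD_eq_of_mem (mem_map_of_mem _ hvS) ?_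
    simp only [mem_map, mem_filter]
    rintro _ ⟨s, ⟨hs, hse, hsb⟩, rfl⟩
    exact hmax s hs hse hsb
  rw [chainAux, if_neg (card_pos.1 (card_pos_iff_exists_mem.2 ⟨v, hvS⟩))]
  dsimp only
  rw [hb', ← hve]

lemma chainAux_snd_eq (n : ℕ) (rem : Multiset (ℤ × ℤ)) (b e : ℤ) :
    ∃ c ≤ rem, (chainAux n rem b e).2 = truncAll c + (rem - c) := by
  induction n generalizing rem b e with
  | zero => exact ⟨0, zero_le _, by simp [chainAux, truncAll]⟩
  | succ n ih =>
    by_cases hstop : ∀ s ∈ rem, s.2 = e → b ≤ s.1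
    · exact ⟨0, zero_le _, by simp [chainAux_of_forall_le _ _ _ _ hstop, truncAll]⟩
    push Not at hstop
    have hS : (rem.filter fun s => s.2 = e ∧ s.1 < b) ≠ 0 := by
      obtain ⟨s, hs, hse, hsb⟩ := hstop
      exact card_pos.1 (card_pos_iff_exists_mem.2 ⟨s, mem_filter.2 ⟨hs, hse, hsb⟩⟩)
    obtain ⟨v, hvS, hvmax⟩ := exists_max_image Prod.fst hS
    obtain ⟨hv, hve, hvb⟩ := mem_filter.1 hvS
    obtain ⟨c, hc, hceq⟩ := ih (rem.erase v) v.1 (e - 1)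
    refine ⟨v ::ₘ c, (cons_le_cons v hc).trans (cons_erase hv).le, ?_⟩
    rw [chainAux_succ_of_isMax n rem b e hv hve hvb
      fun s hs hse hsb => hvmax s (mem_filter.2 ⟨hs, hse, hsb⟩), hceq, truncAll_cons,
      sub_cons, add_assoc]

lemma exists_top_segment {a : Multiset (ℤ × ℤ)} (ha : a ≠ 0) :
    ∃ v ∈ a, (∀ s ∈ a, s.2 ≤ v.2) ∧ ∀ s ∈ a, s.2 = v.2 → s.1 ≤ v.1 := by
  obtain ⟨w, hw, hwmax⟩ := exists_max_image Prod.snd ha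
  have hS : (a.filter fun s => s.2 = w.2) ≠ 0 :=
    card_pos.1 (card_pos_iff_exists_mem.2 ⟨w, mem_filter.2 ⟨hw, rfl⟩⟩)
  obtain ⟨v, hvS, hvmax⟩ := exists_max_image Prod.fst hS
  obtain ⟨hv, hvw⟩ := mem_filter.1 hvS
  refine ⟨v, hv, fun s hs => hvw ▸ hwmax s hs, fun s hs hse => hvmax s (mem_filter.2 ⟨hs, ?_⟩)⟩
  rw [hse, hvw]

/-- Choosing the top segment `Δ₁ = v` is itself a chain stage, with the bound `v.1 + 1`. -/
lemma mwaStep_eq_chainAux {a : Multiset (ℤ × ℤ)} {v : ℤ × ℤ} (hv : v ∈ a)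
    (hend : ∀ s ∈ a, s.2 ≤ v.2) (hbeg : ∀ s ∈ a, s.2 = v.2 → s.1 ≤ v.1) :
    mwaStep a = ((v.2 + 1 - (chainAux (card a + 1) a (v.1 + 1) v.2).1, v.2),
      (chainAux (card a + 1) a (v.1 + 1) v.2).2) := by
  have hx : msMaxD (a.map Prod.snd) = v.2 := by
    refine msMaxD_eq_of_mem (mem_map_of_mem _ hv) ?_
    simp only [mem_map]
    rintro _ ⟨s, hs, rfl⟩
    exact hend s hs
  have hb : msMaxD ((a.filter fun s => s.2 = v.2).map Prod.fst) = v.1 := by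
    refine msMaxD_eq_of_mem (mem_map_of_mem _ (mem_filter.2 ⟨hv, rfl⟩)) ?_
    simp only [mem_map, mem_filter]
    rintro _ ⟨s, ⟨hs, hse⟩, rfl⟩
    exact hbeg s hs hse
  rw [chainAux_succ_of_isMax _ a _ _ hv rfl (lt_add_one _) fun s hs hse _ => hbeg s hs hse]
  unfold mwaStep
  dsimp only
  rw [hx, hb, Prod.mk.eta]
  congr 2
  push_cast
  ring

lemma mwaStep_snd_eq {a : Multiset (ℤ × ℤ)} (ha : a ≠ 0) :
    ∃ c ≤ a, c ≠ 0 ∧ (mwaStep a).2 = truncAll c + (a - c) := by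
  obtain ⟨v, hv, hend, hbeg⟩ := exists_top_segment ha
  obtain ⟨c, hc, hceq⟩ := chainAux_snd_eq (card a) (a.erase v) v.1 (v.2 - 1)
  refine ⟨v ::ₘ c, (cons_le_cons v hc).trans (cons_erase hv).le, cons_ne_zero, ?_⟩
  rw [mwaStep_eq_chainAux hv hend hbeg,
    chainAux_succ_of_isMax _ a _ _ hv rfl (lt_add_one _) fun s hs hse _ => hbeg s hs hse,
    hceq, truncAll_cons, sub_cons, add_assoc]

lemma validMS_mwaStep {a : Multiset (ℤ × ℤ)} (hval : ValidMS a) (ha : a ≠ 0) :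
    ValidMS (mwaStep a).2 := by
  obtain ⟨c, -, -, hc⟩ := mwaStep_snd_eq ha
  rw [hc]
  exact validMS_add (validMS_truncAll c) (validMS_of_le tsub_le_self hval)

lemma msSize_mwaStep_lt {a : Multiset (ℤ × ℤ)} (hval : ValidMS a) (ha : a ≠ 0) :
    msSize (mwaStep a).2 < msSize a := by
  obtain ⟨c, hca, hc0, hc⟩ := mwaStep_snd_eq ha
  rw [hc]
  exact msSize_truncAll_add_sub_lt hval hca hc0

lemma MWA_zero : MWA 0 = 0 := rfl

lemma mwaAux_eq_MWA (n : ℕ) :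
    ∀ a : Multiset (ℤ × ℤ), ValidMS a → msSize a ≤ n → mwaAux n a = MWA a := by
  induction n using Nat.strong_induction_on with
  | _ n ih =>
    intro a hval hn
    rcases eq_or_ne a 0 with rfl | ha
    · cases n <;> rfl
    have hlt := msSize_mwaStep_lt hval ha
    have hstep := validMS_mwaStep hval ha
    obtain ⟨k, hk⟩ : ∃ k, msSize a = k + 1 :=
      ⟨msSize a - 1, by have := mt (eq_zero_of_msSize_eq_zero hval) ha; omega⟩
    obtain ⟨m, rfl⟩ : ∃ m, n = m + 1 := ⟨n - 1, by omega⟩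
    rw [MWA, hk]
    simp only [mwaAux, if_neg ha]
    rw [ih m (by omega) _ hstep (by omega), ih k (by omega) _ hstep (by omega)]

lemma MWA_eq_cons {a : Multiset (ℤ × ℤ)} (hval : ValidMS a) (ha : a ≠ 0) :
    MWA a = (mwaStep a).1 ::ₘ MWA (mwaStep a).2 := by
  rw [← mwaAux_eq_MWA (msSize a + 1) a hval (Nat.le_succ _)]
  simp only [mwaAux, if_neg ha]
  rw [mwaAux_eq_MWA _ _ (validMS_mwaStep hval ha) (msSize_mwaStep_lt hval ha).le]

lemma chainAux_rectN_add_of_aligned (A B : ℤ) (other : Multiset (ℤ × ℤ)) (t : ℕ) :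
    ∀ n, t ≤ n → chainAux n (rectN A B t + other) (A + t) (B + t - 1) =
      ((chainAux (n - t) other A (B - 1)).1 + t,
        truncAll (rectN A B t) + (chainAux (n - t) other A (B - 1)).2) := by
  induction t with
  | zero => intro n _; simp [rectN, truncAll]
  | succ t ih =>
    intro n hn
    obtain ⟨n, rfl⟩ : ∃ m, n = m + 1 := ⟨n - 1, by omega⟩
    rw [show B + ((t + 1 : ℕ) : ℤ) - 1 = B + t by push_cast; ring, rectN_succ, cons_add,
      chainAux_succ_of_isMax n _ _ _ (mem_cons_self _ _) rfl (by push_cast; omega)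
        (fun s _ _ hs => by push_cast at hs; omega),
      erase_cons_head]
    dsimp only
    rw [ih n (by omega), truncAll_cons, show n + 1 - (t + 1) = n - t by omega]
    simp only [add_assoc]

lemma chainAux_rectN_add {A B b : ℤ} {t n : ℕ} (other : Multiset (ℤ × ℤ)) (hn : t < n)
    (hb : A + t < b) (hother : ∀ s ∈ other, s.2 = B + t → s.1 < b → s.1 ≤ A + t) :
    chainAux n (rectN A B (t + 1) + other) b (B + t) =
      ((chainAux (n - (t + 1)) other A (B - 1)).1 + (t + 1),
        truncAll (rectN A B (t + 1)) + (chainAux (n - (t + 1)) other A (B - 1)).2) := by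
  obtain ⟨n, rfl⟩ : ∃ m, n = m + 1 := ⟨n - 1, by omega⟩
  have hmax : ∀ s ∈ (A + t, B + t) ::ₘ (rectN A B t + other), s.2 = B + t → s.1 < b →
      s.1 ≤ A + t := by
    intro s hs hse hsb
    rcases mem_cons.1 hs with rfl | hs
    · exact le_rfl
    rcases mem_add.1 hs with hs | hs
    · obtain ⟨j, hj, rfl⟩ := mem_rectN.1 hs
      simp only at hse
      omega
    · exact hother s hs hse hsb
  rw [rectN_succ, cons_add, chainAux_succ_of_isMax n _ _ _ (mem_cons_self _ _) rfl hb hmax,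
    erase_cons_head, chainAux_rectN_add_of_aligned A B other t n (by omega), truncAll_cons,
    show n + 1 - (t + 1) = n - t by omega]
  simp only [add_assoc]

lemma mwaStep_rectN_add {A B : ℤ} {t : ℕ} {other : Multiset (ℤ × ℤ)}
    (hend : ∀ s ∈ other, s.2 ≤ B + t) (hbeg : ∀ s ∈ other, s.2 = B + t → s.1 ≤ A + t)
    (hstop : ∀ s ∈ other, s.2 = B - 1 → A ≤ s.1) :
    mwaStep (rectN A B (t + 1) + other) = ((B, B + t), truncAll (rectN A B (t + 1)) + other) := by
  have hv : (A + t, B + t) ∈ rectN A B (t + 1) + other := by simp [rectN_succ]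
  have hrect : ∀ s ∈ rectN A B (t + 1), s.2 ≤ B + t ∧ (s.2 = B + t → s.1 ≤ A + t) :=
    forall_mem_rectN.2 fun j hj => by simp only; omega
  rw [mwaStep_eq_chainAux hv
      (fun s hs => (mem_add.1 hs).elim (fun h => (hrect s h).1) (hend s))
      (fun s hs => (mem_add.1 hs).elim (fun h => (hrect s h).2) (hbeg s)),
    chainAux_rectN_add other (by rw [card_add, card_rectN]; omega) (lt_add_one _)
      fun s _ _ hs => by omega,
    chainAux_of_forall_le _ _ _ _ hstop]
  simp only [zero_add, Prod.mk.injEq, and_true]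
  push_cast
  ring

lemma mwaStep_rectN_add_rectN_of_crossing {A1 B1 A2 : ℤ} {u v : ℕ} (hA : A1 + u + 1 < A2) :
    mwaStep (rectN A1 B1 (u + 1 + (v + 1)) + rectN A2 (B1 + u + 1) (v + 1)) =
      ((B1, B1 + u + 1 + v), truncAll (rectN A2 (B1 + u + 1) (v + 1)) +
        (truncAll (rectN A1 B1 (u + 1)) + rectN (A1 + u + 1) (B1 + u + 1) (v + 1))) := by
  set m1 := rectN A1 B1 (u + 1 + (v + 1))
  set m2 := rectN A2 (B1 + u + 1) (v + 1)
  set upper := rectN (A1 + u + 1) (B1 + u + 1) (v + 1)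
  have hsplit : m1 = rectN A1 B1 (u + 1) + upper := rectN_succ_add A1 B1 u (v + 1)
  have hv : (A2 + v, B1 + u + 1 + v) ∈ m1 + m2 := by simp [m2, rectN_succ]
  have htop : ∀ s ∈ m1 + m2, s.2 ≤ B1 + u + 1 + v ∧ (s.2 = B1 + u + 1 + v → s.1 ≤ A2 + v) := by
    intro s hs
    rcases mem_add.1 hs with hs | hs <;>
    · obtain ⟨j, hj, rfl⟩ := mem_rectN.1 hs
      simp only
      omega
  have hupper : ∀ s ∈ upper, B1 + u + 1 ≤ s.2 := by
    intro s hs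
    obtain ⟨j, hj, rfl⟩ := mem_rectN.1 hs
    simp only
    omega
  have hcard : card (m1 + m2) = u + 1 + (v + 1) + (v + 1) := by
    simp only [m1, m2, card_add, card_rectN]
  rw [mwaStep_eq_chainAux hv (fun s hs => (htop s hs).1) (fun s hs => (htop s hs).2), hcard,
    add_comm m1 m2, chainAux_rectN_add m1 (by omega) (lt_add_one _) fun s _ _ hs => by omega,
    hsplit, show B1 + u + 1 - 1 = B1 + u by ring,
    chainAux_rectN_add upper (by omega) (by omega) fun s hs hse _ => by
      have := hupper s hs; omega,
    chainAux_of_forall_le _ _ _ _ fun s hs hse => by have := hupper s hs; omega]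
  refine Prod.ext (Prod.ext ?_ rfl) rfl
  push_cast
  ring

lemma MWA_rectN_add {A B : ℤ} {t : ℕ} {other : Multiset (ℤ × ℤ)} (hAB : A ≤ B)
    (hval : ValidMS other) (hend : ∀ s ∈ other, s.2 ≤ B + t)
    (hbeg : ∀ s ∈ other, s.2 = B + t → s.1 ≤ A + t) (hstop : ∀ s ∈ other, s.2 = B - 1 → A ≤ s.1) :
    MWA (rectN A B (t + 1) + other) =
      (B, B + t) ::ₘ MWA (truncAll (rectN A B (t + 1)) + other) := by
  rw [MWA_eq_cons (validMS_add (validMS_rectN hAB _) hval) (by simp [rectN_succ]),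
    mwaStep_rectN_add hend hbeg hstop]

lemma MWA_rectN {A B : ℤ} (hAB : A ≤ B) (t : ℕ) :
    MWA (rectN A B (t + 1)) = (B, B + t) ::ₘ MWA (truncAll (rectN A B (t + 1))) := by
  simpa using MWA_rectN_add (t := t) (other := 0) hAB (by simp [ValidMS]) (by simp) (by simp)
    (by simp)

lemma MWA_rectN_add_of_peel {A B : ℤ} {t : ℕ} {other : Multiset (ℤ × ℤ)} (hAB : A ≤ B)
    (hval : ValidMS other) (hend : ∀ s ∈ other, s.2 ≤ B + t)
    (hbeg : ∀ s ∈ other, s.2 = B + t → s.1 ≤ A + t) (hstop : ∀ s ∈ other, s.2 = B - 1 → A ≤ s.1)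
    (ih : MWA (truncAll (rectN A B (t + 1)) + other) =
      MWA (truncAll (rectN A B (t + 1))) + MWA other) :
    MWA (rectN A B (t + 1) + other) = MWA (rectN A B (t + 1)) + MWA other := by
  rw [MWA_rectN_add hAB hval hend hbeg hstop, MWA_rectN hAB, ih, cons_add]

lemma MWA_rectN_add_rectN_of_crossing {A1 B1 A2 : ℤ} {u v : ℕ} (hAB1 : A1 ≤ B1)
    (hA : A1 + u + 1 < A2) (hAB2 : A2 ≤ B1 + u + 1) :
    MWA (rectN A1 B1 (u + 1 + (v + 1)) + rectN A2 (B1 + u + 1) (v + 1)) =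
      (B1, B1 + u + 1 + v) ::ₘ (B1 + u + 1, B1 + u + 1 + v) ::ₘ
        MWA (truncAll (rectN A1 B1 (u + 1 + (v + 1))) +
          truncAll (rectN A2 (B1 + u + 1) (v + 1))) := by
  have hother : ∀ s ∈ truncAll (rectN A2 (B1 + u + 1) (v + 1)) + truncAll (rectN A1 B1 (u + 1)),
      s.2 ≤ B1 + u + v ∧ (s.2 = B1 + u → A1 + u + 1 ≤ s.1) := by
    intro s hs
    rcases mem_add.1 hs with hs | hs <;>
    · obtain ⟨j, hj, rfl⟩ := mem_rectN.1 (mem_of_le (truncAll_rectN_le _ _ _) hs)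
      simp only
      omega
  rw [MWA_eq_cons (validMS_add (validMS_rectN hAB1 _) (validMS_rectN hAB2 _))
      (by simp [rectN_succ]),
    mwaStep_rectN_add_rectN_of_crossing hA]
  dsimp only
  rw [add_comm (truncAll (rectN A1 B1 (u + 1))), add_left_comm,
    MWA_rectN_add (by omega) (validMS_add (validMS_truncAll _) (validMS_truncAll _))
      (fun s hs => by have := (hother s hs).1; omega) (fun s hs hse => by
        have := (hother s hs).1; omega) fun s hs hse => (hother s hs).2 (by omega),
    rectN_succ_add, truncAll_add]
  congr 3
  abel

lemma MWA_truncAll_rectN_add {A B : ℤ} {t : ℕ} {m : Multiset (ℤ × ℤ)}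
    (h : A < B → MWA (rectN A (B - 1) t + m) = MWA (rectN A (B - 1) t) + MWA m) :
    MWA (truncAll (rectN A B t) + m) = MWA (truncAll (rectN A B t)) + MWA m := by
  rcases lt_or_ge A B with hlt | hge
  · rw [truncAll_rectN_of_lt hlt]
    exact h hlt
  · rw [truncAll_rectN_of_le hge, zero_add, MWA_zero, zero_add]

lemma MWA_add_truncAll_rectN {A B : ℤ} {t : ℕ} {m : Multiset (ℤ × ℤ)}
    (h : A < B → MWA (m + rectN A (B - 1) t) = MWA m + MWA (rectN A (B - 1) t)) :
    MWA (m + truncAll (rectN A B t)) = MWA m + MWA (truncAll (rectN A B t)) := by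
  rw [add_comm, add_comm (MWA m)]
  exact MWA_truncAll_rectN_add fun hlt => by rw [add_comm, add_comm (MWA _), h hlt]

theorem MWA_rectN_add_rectN (t1 t2 : ℕ) (A1 B1 A2 B2 : ℤ) (hAB1 : A1 ≤ B1) (hAB2 : A2 ≤ B2)
    (hA : A1 ≤ A2) (hD : B2 + t2 ≤ B1 + t1 ∨ B2 + t2 = B1 + t1 + 1 ∧ B1 - A1 < B2 - A2) :
    MWA (rectN A1 B1 (t1 + 1) + rectN A2 B2 (t2 + 1)) =
      MWA (rectN A1 B1 (t1 + 1)) + MWA (rectN A2 B2 (t2 + 1)) := by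
  by_cases hpeel1 : B2 + t2 < B1 + t1 ∨ B2 + t2 = B1 + t1 ∧ B1 - A1 ≤ B2 - A2
  · refine MWA_rectN_add_of_peel hAB1 (validMS_rectN hAB2 _) ?_ ?_ ?_
      (MWA_truncAll_rectN_add fun h =>
        MWA_rectN_add_rectN t1 t2 A1 (B1 - 1) A2 B2 (by omega) hAB2 hA (by omega)) <;>
    · intro s hs
      obtain ⟨j, hj, rfl⟩ := mem_rectN.1 hs
      simp only
      omega
  by_cases hpeel2 : B2 + t2 = B1 + t1 + 1 ∨ B2 ≤ B1
  · rw [add_comm, add_comm (MWA _)]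
    refine MWA_rectN_add_of_peel hAB2 (validMS_rectN hAB1 _) ?_ ?_ ?_
      (MWA_truncAll_rectN_add fun h => by
        rw [add_comm, add_comm (MWA _)]
        exact MWA_rectN_add_rectN t1 t2 A1 B1 A2 (B2 - 1) hAB1 (by omega) hA (by omega)) <;>
    · intro s hs
      obtain ⟨j, hj, rfl⟩ := mem_rectN.1 hs
      simp only
      omega
  obtain ⟨u, hu⟩ : ∃ u : ℕ, (u : ℤ) = B2 - B1 - 1 := ⟨(B2 - B1 - 1).toNat, by omega⟩
  obtain rfl : t1 = u + 1 + t2 := by omega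
  obtain rfl : B2 = B1 + u + 1 := by omega
  rw [MWA_rectN hAB1, MWA_rectN hAB2, show u + 1 + t2 + 1 = u + 1 + (t2 + 1) from rfl,
    MWA_rectN_add_rectN_of_crossing hAB1 (by omega) hAB2, cons_add, add_cons,
    truncAll_rectN_of_lt (by omega : A1 < B1),
    MWA_add_truncAll_rectN (m := rectN A1 (B1 - 1) (u + 1 + (t2 + 1))) fun h =>
      MWA_rectN_add_rectN (u + 1 + t2) t2 A1 (B1 - 1) A2 (B1 + u + 1 - 1) (by omega)
        (by omega) hA (by omega)]
  push_cast
  ring_nf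
termination_by (B1 - A1 + (B2 - A2)).toNat
decreasing_by all_goals omega

end SpehMWA

theorem mwa_additive_of_contained_support
    (A1 B1 C1 D1 A2 B2 C2 D2 : ℤ)
    (h1 : SpehQuad A1 B1 C1 D1) (h2 : SpehQuad A2 B2 C2 D2)
    (hA : A1 ≤ A2) (hD : D2 ≤ D1) :
    MWA (rectMulti A1 B1 C1 + rectMulti A2 B2 C2) =
      MWA (rectMulti A1 B1 C1) + MWA (rectMulti A2 B2 C2) := by
  obtain ⟨hAB1, hAC1, hsum1⟩ := h1
  obtain ⟨hAB2, hAC2, hsum2⟩ := h2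
  rw [SpehMWA.rectMulti_eq_rectN, SpehMWA.rectMulti_eq_rectN,
    show (C1 - A1 + 1).toNat = (C1 - A1).toNat + 1 by omega,
    show (C2 - A2 + 1).toNat = (C2 - A2).toNat + 1 by omega]
  exact SpehMWA.MWA_rectN_add_rectN _ _ A1 B1 A2 B2 hAB1 hAB2 hA (Or.inl (by omega))
end

section
/- The relation ≤ on multisegments (c ≤ b iff c = b or c < b in the linking order) is a partial order; in particular, for multisegments b and c, if c ≤ b and b ≤ c then b = c, and there is no multisegment b with b < b. -/
/-! The sum of the squared lengths of the segments strictly increases under every elementary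
linking operation `Prec`: if `s` starts and ends before `t`, replacing `s, t` by their union and
intersection preserves the total length and raises the sum of squares by
`2 (t.1 - s.1) (t.2 - s.2) > 0`. Hence `MLt` is contained in a strict order, so it is irreflexive
and, being transitive, antisymmetric. -/

def segLen (s : ℤ × ℤ) : ℤ := s.2 + 1 - s.1

def sqLenSum (a : Multiset (ℤ × ℤ)) : ℤ := (a.map fun s => segLen s ^ 2).sum

@[simp]
lemma sqLenSum_zero : sqLenSum 0 = 0 := rfl

@[simp]
lemma sqLenSum_cons (s : ℤ × ℤ) (a : Multiset (ℤ × ℤ)) :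
    sqLenSum (s ::ₘ a) = segLen s ^ 2 + sqLenSum a := by
  simp [sqLenSum]

@[simp]
lemma sqLenSum_add (a b : Multiset (ℤ × ℤ)) : sqLenSum (a + b) = sqLenSum a + sqLenSum b := by
  simp [sqLenSum]

def Precedes (s t : ℤ × ℤ) : Prop := s.1 < t.1 ∧ t.1 ≤ s.2 + 1 ∧ s.2 < t.2

lemma Linked.precedes_or_precedes {s t : ℤ × ℤ} (h : Linked s t) :
    Precedes s t ∨ Precedes t s := by
  obtain ⟨⟨x, y, hxy, hU⟩, hne_s, hne_t⟩ := h
  simp only [segSet] at hU hne_s hne_t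
  have hs : s.1 ≤ s.2 := by
    by_contra h
    exact hne_t (by rw [Finset.Icc_eq_empty h, Finset.empty_union])
  have ht : t.1 ≤ t.2 := by
    by_contra h
    exact hne_s (by rw [Finset.Icc_eq_empty h, Finset.union_empty])
  rw [hU] at hne_s hne_t
  have hxy_s : ¬(x = s.1 ∧ y = s.2) := fun ⟨hx, hy⟩ => hne_s (by rw [hx, hy])
  have hxy_t : ¬(x = t.1 ∧ y = t.2) := fun ⟨hx, hy⟩ => hne_t (by rw [hx, hy])
  have hmem (z : ℤ) : (s.1 ≤ z ∧ z ≤ s.2 ∨ t.1 ≤ z ∧ z ≤ t.2) ↔ x ≤ z ∧ z ≤ y := by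
    simpa only [Finset.mem_union, Finset.mem_Icc] using Finset.ext_iff.mp hU z
  have := hmem s.1
  have := hmem s.2
  have := hmem t.1
  have := hmem t.2
  have := hmem x
  have := hmem y
  have := hmem (max s.1 t.1 - 1)
  unfold Precedes
  omega

lemma Prec.exists_precedes {c b : Multiset (ℤ × ℤ)} (h : Prec c b) :
    ∃ s t rest, b = s ::ₘ t ::ₘ rest ∧ Precedes s t ∧
      c = (s.1, t.2) ::ₘ (segInterM s t + rest) := by
  obtain ⟨s, t, rest, rfl, hlink, rfl⟩ := h
  rcases hlink.precedes_or_precedes with hst | hts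
  · refine ⟨s, t, rest, rfl, hst, ?_⟩
    rw [min_eq_left hst.1.le, max_eq_right hst.2.2.le]
  · refine ⟨t, s, rest, Multiset.cons_swap _ _ _, hts, ?_⟩
    rw [min_eq_right hts.1.le, max_eq_left hts.2.2.le]
    unfold segInterM
    rw [max_comm, min_comm]

/-- The intersection `[t.1, s.2]` may be empty, but then its length is `0` anyway. -/
lemma Precedes.sqLenSum_segInterM {s t : ℤ × ℤ} (h : Precedes s t) :
    sqLenSum (segInterM s t) = segLen (t.1, s.2) ^ 2 := by
  unfold segInterM
  rw [max_eq_right h.1.le, min_eq_left h.2.2.le]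
  split_ifs with hne
  · simp [sqLenSum]
  · have hlen : segLen (t.1, s.2) = 0 := by
      have := h.2.1
      simp only [segLen]
      omega
    simp [hlen]

lemma Precedes.sq_segLen_add_sq_segLen_lt {s t : ℤ × ℤ} (h : Precedes s t) :
    segLen s ^ 2 + segLen t ^ 2 < segLen (s.1, t.2) ^ 2 + segLen (t.1, s.2) ^ 2 := by
  have key : segLen (s.1, t.2) ^ 2 + segLen (t.1, s.2) ^ 2 - (segLen s ^ 2 + segLen t ^ 2) =
      2 * ((t.1 - s.1) * (t.2 - s.2)) := by
    simp only [segLen]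
    ring
  have := mul_pos (sub_pos.2 h.1) (sub_pos.2 h.2.2)
  linarith

lemma Prec.sqLenSum_lt {c b : Multiset (ℤ × ℤ)} (h : Prec c b) : sqLenSum b < sqLenSum c := by
  obtain ⟨s, t, rest, rfl, hst, rfl⟩ := h.exists_precedes
  simp only [sqLenSum_cons, sqLenSum_add, hst.sqLenSum_segInterM]
  linarith [hst.sq_segLen_add_sq_segLen_lt]

lemma MLt.sqLenSum_lt {c b : Multiset (ℤ × ℤ)} (h : MLt c b) : sqLenSum b < sqLenSum c := by
  induction h with
  | single h => exact h.sqLenSum_lt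
  | tail _ h ih => exact h.sqLenSum_lt.trans ih

lemma mlt_irrefl (b : Multiset (ℤ × ℤ)) : ¬ MLt b b :=
  fun h => lt_irrefl _ h.sqLenSum_lt

theorem linking_order_is_partial_order :
    (∀ b c : Multiset (ℤ × ℤ), ValidMS b → ValidMS c →
      (c = b ∨ MLt c b) → (b = c ∨ MLt b c) → b = c) ∧
    (∀ b : Multiset (ℤ × ℤ), ValidMS b → ¬ MLt b b) := by
  refine ⟨?_, fun b _ => mlt_irrefl b⟩
  rintro b c - - (rfl | hcb) (hbc | hbc)
  · rfl
  · rfl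
  · exact hbc
  · exact absurd (Relation.TransGen.trans hbc hcb) (mlt_irrefl b)
end

section
/- For a multisegment a, let r(a) denote the multisegment obtained by replacing each segment [b,e] of a by the reflected segment [−e,−b]. Then for every multisegment a, MWA(r(a)) = r(MWA(a)); equivalently, the dual algorithm which at each stage picks segments with minimal beginning (and among them minimal end) and removes beginnings instead of ends computes the same multisegment MWA(a). -/
/-!
One step of the algorithm removes the last point of every segment of a chain `S` descending
from the maximal end `x`; the reflected algorithm removes the first point of every segment of a
chain `D` ascending from the minimal beginning `y`, and `MWA (reflMS a)` is the reflection of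
the multisegment this dual algorithm produces.

If `[y, y] ∈ S`, then `S = D = {[x], [x - 1], …, [y]}` and the two steps coincide. Otherwise the
steps commute: after one of them the chain of the other consists of the same segments, except
that those shared by `S` and `D` have lost a point (their ends, resp. beginnings, move by one),
so it produces the same segment `Γ`, and a direct count shows that both orders leave the same
multisegment. Induction on the number of points then identifies the two algorithms.
-/

namespace MoeglinWaldspurger

open Multiset

theorem msMaxD_spec {m : Multiset ℤ} (h : m ≠ 0) : msMaxD m ∈ m ∧ ∀ z ∈ m, z ≤ msMaxD m := by
  obtain ⟨b, hb⟩ := Finset.max_of_nonempty (Multiset.toFinset_nonempty.2 h)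
  have hmb : msMaxD m = b := by simp [msMaxD, hb]
  rw [hmb]
  exact ⟨mem_toFinset.1 (Finset.mem_of_max hb),
    fun z hz => WithBot.coe_le_coe.1 (hb ▸ Finset.le_max (mem_toFinset.2 hz))⟩

theorem msMaxD_eq {m : Multiset ℤ} {z : ℤ} (hz : z ∈ m) (hub : ∀ w ∈ m, w ≤ z) :
    msMaxD m = z :=
  have h := msMaxD_spec (ne_of_mem_of_not_mem' hz (notMem_zero _))
  le_antisymm (hub _ h.1) (h.2 _ hz)

/-! ### Reflection and truncation -/

def reflSeg (s : ℤ × ℤ) : ℤ × ℤ := (-s.2, -s.1)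

@[simp]
theorem reflSeg_reflSeg (s : ℤ × ℤ) : reflSeg (reflSeg s) = s := by
  simp [reflSeg]

theorem reflMS_eq_map (a : Multiset (ℤ × ℤ)) : reflMS a = a.map reflSeg := rfl

@[simp]
theorem reflMS_reflMS (a : Multiset (ℤ × ℤ)) : reflMS (reflMS a) = a := by
  simp [reflMS_eq_map, map_map]

theorem mem_reflMS {a : Multiset (ℤ × ℤ)} {s : ℤ × ℤ} : s ∈ reflMS a ↔ reflSeg s ∈ a := by
  rw [reflMS_eq_map, mem_map]
  exact ⟨fun ⟨t, ht, hts⟩ => hts ▸ (reflSeg_reflSeg t).symm ▸ ht,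
    fun h => ⟨_, h, reflSeg_reflSeg s⟩⟩

theorem mk_mem_reflMS {a : Multiset (ℤ × ℤ)} {p q : ℤ} :
    (p, q) ∈ reflMS a ↔ (-q, -p) ∈ a :=
  mem_reflMS

@[simp]
theorem reflMS_eq_zero {a : Multiset (ℤ × ℤ)} : reflMS a = 0 ↔ a = 0 := map_eq_zero

theorem reflMS_add (u v : Multiset (ℤ × ℤ)) : reflMS (u + v) = reflMS u + reflMS v :=
  map_add _ _ _

theorem reflMS_sub (u v : Multiset (ℤ × ℤ)) : reflMS (u - v) = reflMS u - reflMS v := by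
  ext s
  rw [count_sub, ← reflSeg_reflSeg s]
  simp only [reflMS_eq_map,
    count_map_eq_count' _ _ (Function.LeftInverse.injective reflSeg_reflSeg), count_sub]

theorem reflMS_cons (s : ℤ × ℤ) (u : Multiset (ℤ × ℤ)) :
    reflMS (s ::ₘ u) = reflSeg s ::ₘ reflMS u :=
  map_cons _ _ _

theorem validMS_reflMS {a : Multiset (ℤ × ℤ)} (ha : ValidMS a) : ValidMS (reflMS a) := by
  intro s hs
  have := ha _ (mem_reflMS.1 hs)
  simp only [reflSeg] at this
  omega

theorem msSize_reflMS (a : Multiset (ℤ × ℤ)) : msSize (reflMS a) = msSize a := by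
  simp only [msSize, reflMS, map_map, Function.comp_def]
  congr 2
  ext s
  congr 1
  ring

theorem msSize_add (u v : Multiset (ℤ × ℤ)) : msSize (u + v) = msSize u + msSize v := by
  simp [msSize]

theorem eq_zero_of_msSize_eq_zero {a : Multiset (ℤ × ℤ)} (ha : ValidMS a)
    (h : msSize a = 0) : a = 0 := by
  refine eq_zero_of_forall_notMem fun s hs => ?_
  obtain ⟨t, rfl⟩ := exists_cons_of_mem hs
  have := ha s hs
  simp only [msSize, map_cons, sum_cons] at h
  omega

def truncateFirst (s : ℤ × ℤ) : Multiset (ℤ × ℤ) :=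
  if s.1 + 1 ≤ s.2 then {(s.1 + 1, s.2)} else 0

def truncateIn (a S : Multiset (ℤ × ℤ)) : Multiset (ℤ × ℤ) := a - S + S.bind truncate

def truncateFirstIn (a S : Multiset (ℤ × ℤ)) : Multiset (ℤ × ℤ) :=
  a - S + S.bind truncateFirst

theorem reflMS_bind_truncate (S : Multiset (ℤ × ℤ)) :
    reflMS (S.bind truncate) = (reflMS S).bind truncateFirst := by
  simp only [reflMS_eq_map, map_bind, bind_map]
  refine bind_congr fun s _ => ?_
  unfold truncate truncateFirst reflSeg
  split_ifs <;> simp <;> omega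

theorem reflMS_truncateIn (a S : Multiset (ℤ × ℤ)) :
    reflMS (truncateIn a S) = truncateFirstIn (reflMS a) (reflMS S) := by
  rw [truncateIn, truncateFirstIn, reflMS_add, reflMS_sub, reflMS_bind_truncate]

theorem reflMS_truncateFirstIn (a D : Multiset (ℤ × ℤ)) :
    reflMS (truncateFirstIn a D) = truncateIn (reflMS a) (reflMS D) := by
  rw [← reflMS_reflMS (truncateIn _ _), reflMS_truncateIn, reflMS_reflMS, reflMS_reflMS]

theorem validMS_bind_truncate (S : Multiset (ℤ × ℤ)) : ValidMS (S.bind truncate) := by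
  intro s hs
  obtain ⟨t, -, ht⟩ := mem_bind.1 hs
  unfold truncate at ht
  split_ifs at ht with h
  · rw [mem_singleton.1 ht]
    exact h
  · exact absurd ht (notMem_zero _)

theorem msSize_bind_truncate {S : Multiset (ℤ × ℤ)} (hS : ValidMS S) :
    msSize (S.bind truncate) + card S = msSize S := by
  induction S using Multiset.induction_on with
  | empty => simp [msSize]
  | cons s S ih =>
    have hs := hS s (mem_cons_self s S)
    have hS' := ih fun t ht => hS t (mem_cons_of_mem ht)
    have hs' : msSize (truncate s) + 1 = msSize {s} := by
      unfold truncate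
      split_ifs <;> simp [msSize] <;> omega
    rw [cons_bind, card_cons, ← singleton_add, msSize_add, msSize_add]
    omega

theorem validMS_truncateIn {a : Multiset (ℤ × ℤ)} (ha : ValidMS a)
    (S : Multiset (ℤ × ℤ)) : ValidMS (truncateIn a S) := fun s hs =>
  (mem_add.1 hs).elim (fun h => ha s (mem_of_le (Multiset.sub_le_self _ _) h))
    (validMS_bind_truncate S s)

theorem msSize_truncateIn {a S : Multiset (ℤ × ℤ)} (ha : ValidMS a) (hS : S ≤ a) :
    msSize (truncateIn a S) + card S = msSize a := by
  rw [truncateIn, msSize_add, add_assoc,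
    msSize_bind_truncate fun s hs => ha s (mem_of_le hS hs), ← msSize_add, tsub_add_cancel_of_le hS]

theorem mem_truncateIn_of_mem {a S : Multiset (ℤ × ℤ)} {s : ℤ × ℤ} (hs : s ∈ a)
    (hsS : s ∉ S) : s ∈ truncateIn a S :=
  mem_add.2 (Or.inl (mem_sub.2 (by rw [count_eq_zero.2 hsS]; exact count_pos.2 hs)))

theorem mem_truncateIn_of_lt {a S : Multiset (ℤ × ℤ)} {p q : ℤ} (hs : (p, q) ∈ S)
    (hpq : p < q) : (p, q - 1) ∈ truncateIn a S :=
  mem_add.2 (Or.inr (mem_bind.2 ⟨_, hs, by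
    rw [truncate, if_pos (by simp only; omega)]
    exact mem_singleton_self _⟩))

theorem mem_or_of_mem_truncateIn {a S : Multiset (ℤ × ℤ)} {p q : ℤ}
    (h : (p, q) ∈ truncateIn a S) : (p, q) ∈ a ∨ (p, q + 1) ∈ S := by
  refine (mem_add.1 h).imp (mem_of_le (Multiset.sub_le_self _ _)) fun h => ?_
  obtain ⟨s, hs, hps⟩ := mem_bind.1 h
  unfold truncate at hps
  split_ifs at hps
  · obtain rfl : s = (p, q + 1) := by simp only [mem_singleton, Prod.ext_iff] at hps ⊢; omega
    exact hs
  · exact absurd hps (notMem_zero _)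

theorem bind_truncate_eq_zero {S : Multiset (ℤ × ℤ)} (hS : ∀ s ∈ S, s.1 = s.2) :
    S.bind truncate = 0 :=
  eq_zero_of_forall_notMem fun t ht => by
    obtain ⟨s, hs, hts⟩ := mem_bind.1 ht
    simp [truncate, hS s hs] at hts

theorem bind_truncateFirst_eq_zero {S : Multiset (ℤ × ℤ)} (hS : ∀ s ∈ S, s.1 = s.2) :
    S.bind truncateFirst = 0 :=
  eq_zero_of_forall_notMem fun t ht => by
    obtain ⟨s, hs, hts⟩ := mem_bind.1 ht
    simp [truncateFirst, hS s hs] at hts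

/-! ### The chains of one step -/

def chainSegs (x : ℤ) (k : ℕ) (β : ℕ → ℤ) : Multiset (ℤ × ℤ) :=
  (range k).map fun i => (β i, x - i)

def dualChainSegs (y : ℤ) (l : ℕ) (ε : ℕ → ℤ) : Multiset (ℤ × ℤ) :=
  (range l).map fun j : ℕ => (y + j, ε j)

theorem mk_mem_chainSegs {x p q : ℤ} {k : ℕ} {β : ℕ → ℤ} :
    (p, q) ∈ chainSegs x k β ↔ ∃ i < k, β i = p ∧ x - i = q := by
  simp [chainSegs]

theorem mk_mem_dualChainSegs {y p q : ℤ} {l : ℕ} {ε : ℕ → ℤ} :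
    (p, q) ∈ dualChainSegs y l ε ↔ ∃ j < l, y + j = p ∧ ε j = q := by
  simp [dualChainSegs]

theorem nodup_chainSegs (x : ℤ) (k : ℕ) (β : ℕ → ℤ) : (chainSegs x k β).Nodup :=
  (nodup_range k).map fun i j h => by simpa using congrArg Prod.snd h

theorem nodup_dualChainSegs (y : ℤ) (l : ℕ) (ε : ℕ → ℤ) : (dualChainSegs y l ε).Nodup :=
  (nodup_range l).map fun i j h => by simpa using congrArg Prod.fst h

theorem chainSegs_le {a : Multiset (ℤ × ℤ)} {x : ℤ} {k : ℕ} {β : ℕ → ℤ}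
    (hmem : ∀ i < k, (β i, x - i) ∈ a) : chainSegs x k β ≤ a :=
  (le_iff_subset (nodup_chainSegs x k β)).2 fun s hs => by
    obtain ⟨i, hi, rfl⟩ := mem_map.1 hs
    exact hmem i (mem_range.1 hi)

theorem dualChainSegs_le {a : Multiset (ℤ × ℤ)} {y : ℤ} {l : ℕ} {ε : ℕ → ℤ}
    (hmem : ∀ j < l, (y + j, ε j) ∈ a) : dualChainSegs y l ε ≤ a :=
  (le_iff_subset (nodup_dualChainSegs y l ε)).2 fun s hs => by
    obtain ⟨j, hj, rfl⟩ := mem_map.1 hs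
    exact hmem j (mem_range.1 hj)

theorem card_chainSegs (x : ℤ) (k : ℕ) (β : ℕ → ℤ) : card (chainSegs x k β) = k := by
  simp [chainSegs]

theorem chainSegs_succ (x : ℤ) (j : ℕ) (β : ℕ → ℤ) :
    chainSegs x (j + 1) β = (β j, x - j) ::ₘ chainSegs x j β := by
  simp [chainSegs, range_succ]

theorem reflMS_dualChainSegs (y : ℤ) (l : ℕ) (ε : ℕ → ℤ) :
    reflMS (dualChainSegs y l ε) = chainSegs (-y) l fun j => -ε j := by
  simp only [reflMS, dualChainSegs, chainSegs, map_map, Function.comp_def]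
  congr 1
  funext j
  simp only [Prod.mk.injEq, true_and]
  ring

/-- The first `k` segments `(β i, x - i)` of the chain chosen by one step of the algorithm. -/
structure IsMWChainPrefix (a : Multiset (ℤ × ℤ)) (x : ℤ) (k : ℕ) (β : ℕ → ℤ) : Prop where
  pos : 0 < k
  le_top : ∀ s ∈ a, s.2 ≤ x
  mem : ∀ i < k, (β i, x - i) ∈ a
  anti : ∀ i, i + 1 < k → β (i + 1) < β i
  max_zero : ∀ p, (p, x) ∈ a → p ≤ β 0
  max_succ : ∀ i, i + 1 < k → ∀ p < β i, (p, x - i - 1) ∈ a → p ≤ β (i + 1)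

structure IsMWChain (a : Multiset (ℤ × ℤ)) (x : ℤ) (k : ℕ) (β : ℕ → ℤ) : Prop
    extends IsMWChainPrefix a x k β where
  terminal : ∀ p < β (k - 1), (p, x - k) ∉ a

section MWChain

variable {a : Multiset (ℤ × ℤ)} {x : ℤ} {k : ℕ} {β : ℕ → ℤ}

theorem IsMWChainPrefix.card_le (hC : IsMWChainPrefix a x k β) : k ≤ card a := by
  simpa [card_chainSegs] using card_le_card (chainSegs_le hC.mem)

theorem IsMWChainPrefix.extend (hC : IsMWChainPrefix a x k β) {p : ℤ} (hp : p < β (k - 1))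
    (hpa : (p, x - k) ∈ a) : ∃ β', IsMWChainPrefix a x (k + 1) β' := by
  have hne : (a.filter fun s => s.2 = x - k ∧ s.1 < β (k - 1)).map Prod.fst ≠ 0 :=
    ne_of_mem_of_not_mem' (mem_map.2 ⟨(p, x - k), mem_filter.2 ⟨hpa, rfl, hp⟩, rfl⟩)
      (notMem_zero _)
  obtain ⟨hbmem, hbmax⟩ := msMaxD_spec hne
  set b := msMaxD ((a.filter fun s => s.2 = x - k ∧ s.1 < β (k - 1)).map Prod.fst)
  obtain ⟨s, hs, hsb⟩ := mem_map.1 hbmem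
  obtain ⟨hsa, hsx, hsβ⟩ := mem_filter.1 hs
  have hba : (b, x - k) ∈ a := by rwa [← hsb, ← hsx]
  have hbmax' : ∀ q < β (k - 1), (q, x - k) ∈ a → q ≤ b := fun q hq hqa =>
    hbmax q (mem_map.2 ⟨(q, x - k), mem_filter.2 ⟨hqa, rfl, hq⟩, rfl⟩)
  have hk := hC.pos
  refine ⟨Function.update β k b, ⟨by omega, hC.le_top, fun i hi => ?_, fun i hi => ?_,
    fun q hq => ?_, fun i hi q hq hqa => ?_⟩⟩
  · rcases (Nat.lt_succ_iff.1 hi).lt_or_eq with hi | rfl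
    · simpa [Function.update_of_ne hi.ne] using hC.mem i hi
    · simpa using hba
  · rcases (Nat.lt_succ_iff.1 hi).lt_or_eq with hi | hi
    · simpa [Function.update_of_ne hi.ne, Function.update_of_ne (Nat.lt_of_succ_lt hi).ne]
        using hC.anti i hi
    · have : i = k - 1 := by omega
      subst this
      simpa [hi, Function.update_of_ne (show k - 1 ≠ k by omega)] using hsb ▸ hsβ
  · simpa [Function.update_of_ne hk.ne] using hC.max_zero q hq
  · rcases (Nat.lt_succ_iff.1 hi).lt_or_eq with hi | hi
    · simpa [Function.update_of_ne hi.ne, Function.update_of_ne (Nat.lt_of_succ_lt hi).ne]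
        using hC.max_succ i hi q (by simpa [Function.update_of_ne (Nat.lt_of_succ_lt hi).ne]
          using hq) hqa
    · have : i = k - 1 := by omega
      subst this
      rw [hi, Function.update_self]
      rw [Function.update_of_ne (show k - 1 ≠ k by omega)] at hq
      exact hbmax' q hq (by convert hqa using 2; push_cast [Nat.cast_sub hk]; ring)

theorem exists_isMWChain (h0 : a ≠ 0) : ∃ x k β, IsMWChain a x k β := by
  classical
  obtain ⟨hxmem, hxmax⟩ := msMaxD_spec (mt map_eq_zero.1 h0 : a.map Prod.snd ≠ 0)
  set x := msMaxD (a.map Prod.snd)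
  obtain ⟨s, hsa, hsx⟩ := mem_map.1 hxmem
  have hne : (a.filter fun s => s.2 = x).map Prod.fst ≠ 0 :=
    ne_of_mem_of_not_mem' (mem_map.2 ⟨s, mem_filter.2 ⟨hsa, hsx⟩, rfl⟩) (notMem_zero _)
  obtain ⟨hbmem, hbmax⟩ := msMaxD_spec hne
  set b := msMaxD ((a.filter fun s => s.2 = x).map Prod.fst)
  obtain ⟨t, ht, htb⟩ := mem_map.1 hbmem
  obtain ⟨hta, htx⟩ := mem_filter.1 ht
  have hstart : IsMWChainPrefix a x 1 fun _ => b :=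
    ⟨one_pos, fun s hs => hxmax _ (mem_map_of_mem _ hs),
      fun i hi => by simpa [Nat.lt_one_iff.1 hi, ← htb, ← htx] using hta,
      fun i hi => by omega,
      fun p hp => hbmax p (mem_map.2 ⟨(p, x), mem_filter.2 ⟨hp, rfl⟩, rfl⟩),
      fun i hi => by omega⟩
  -- a longest prefix (they are at most `card a` long) cannot be extended
  let P := fun n => ∃ β, IsMWChainPrefix a x n β
  obtain ⟨β, hβ⟩ : P (Nat.findGreatest P (card a)) :=
    Nat.findGreatest_spec hstart.card_le ⟨_, hstart⟩
  refine ⟨x, _, β, ⟨hβ, fun p hp hpa => ?_⟩⟩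
  obtain ⟨β', hβ'⟩ := hβ.extend hp hpa
  exact Nat.findGreatest_is_greatest (Nat.lt_succ_self _) hβ'.card_le ⟨β', hβ'⟩

theorem IsMWChain.mem_sub_chainSegs (hC : IsMWChain a x k β) {j : ℕ} (hj : j < k) :
    (β j, x - j) ∈ a - chainSegs x j β := by
  rw [mem_sub, count_eq_zero.2 fun h => ?_, count_pos]
  · exact hC.mem j hj
  · obtain ⟨i, hi, hij⟩ := mem_map.1 h
    have := congrArg Prod.snd hij
    simp only [mem_range] at hi this
    omega

theorem IsMWChain.msMaxD_candidates (hC : IsMWChain a x k β) {j : ℕ} (hj0 : 0 < j) (hjk : j < k) :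
    (a - chainSegs x j β).filter (fun s => s.2 = x - j ∧ s.1 < β (j - 1)) ≠ 0 ∧
      msMaxD (((a - chainSegs x j β).filter
        fun s => s.2 = x - j ∧ s.1 < β (j - 1)).map Prod.fst) = β j := by
  have hanti : β j < β (j - 1) := by
    simpa [Nat.sub_add_cancel hj0] using hC.anti (j - 1) (by omega)
  have hmem : (β j, x - j) ∈ (a - chainSegs x j β).filter
      (fun s => s.2 = x - j ∧ s.1 < β (j - 1)) :=
    mem_filter.2 ⟨hC.mem_sub_chainSegs hjk, rfl, hanti⟩
  refine ⟨ne_of_mem_of_not_mem' hmem (notMem_zero _), msMaxD_eq (mem_map_of_mem _ hmem) ?_⟩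
  simp only [mem_map, mem_filter]
  rintro _ ⟨s, ⟨hs, hsx, hsβ⟩, rfl⟩
  have := hC.max_succ (j - 1) (by omega) s.1 hsβ
  rw [Nat.sub_add_cancel hj0] at this
  refine this ?_
  convert mem_of_le (Multiset.sub_le_self _ _) hs using 2
  rw [hsx]
  push_cast [Nat.cast_sub hj0]
  ring

theorem IsMWChain.chainAux_eq (hC : IsMWChain a x k β) :
    ∀ fuel j, 0 < j → j ≤ k → card (a - chainSegs x j β) ≤ fuel →
      (chainAux fuel (a - chainSegs x j β) (β (j - 1)) (x - j)).1 = k - j ∧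
      (chainAux fuel (a - chainSegs x j β) (β (j - 1)) (x - j)).2 +
          (chainSegs x j β).bind truncate =
        a - chainSegs x k β + (chainSegs x k β).bind truncate := by
  intro fuel
  induction fuel with
  | zero =>
    intro j hj0 hjk hcard
    obtain rfl : j = k := by
      refine hjk.eq_of_not_lt fun hj => ?_
      have := hC.mem_sub_chainSegs hj
      rw [card_eq_zero.1 (Nat.le_zero.1 hcard)] at this
      exact notMem_zero _ this
    simp [chainAux]
  | succ n ih =>
    intro j hj0 hjk hcard
    rcases hjk.lt_or_eq with hjk | rfl
    · obtain ⟨hne, hmax⟩ := hC.msMaxD_candidates hj0 hjk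
      have herase : (a - chainSegs x j β).erase (β j, x - j) = a - chainSegs x (j + 1) β := by
        rw [chainSegs_succ, ← singleton_add, add_comm, tsub_add_eq_tsub_tsub, sub_singleton]
      have hcard' : card (a - chainSegs x (j + 1) β) ≤ n := by
        have hpos := card_pos_iff_exists_mem.2 ⟨_, hC.mem_sub_chainSegs hjk⟩
        rw [← herase, card_erase_of_mem (hC.mem_sub_chainSegs hjk), Nat.pred_eq_sub_one]
        omega
      obtain ⟨ih1, ih2⟩ := ih (j + 1) (by omega) hjk hcard'
      have hx : x - ((j + 1 : ℕ) : ℤ) = x - j - 1 := by push_cast; ring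
      simp only [Nat.add_sub_cancel, hx] at ih1 ih2
      simp only [chainAux, hne, hmax, herase, if_false]
      refine ⟨by omega, ?_⟩
      rw [← ih2, chainSegs_succ, cons_bind, add_left_comm, add_assoc]
    · have hterminal :
          (a - chainSegs x j β).filter (fun s => s.2 = x - j ∧ s.1 < β (j - 1)) = 0 :=
        filter_eq_nil.2 fun s hs ⟨hsx, hsβ⟩ =>
          hC.terminal s.1 hsβ (hsx ▸ mem_of_le (Multiset.sub_le_self _ _) hs)
      simp [chainAux, hterminal]

theorem IsMWChain.mwaStep_eq (hC : IsMWChain a x k β) :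
    mwaStep a = ((x - k + 1, x), truncateIn a (chainSegs x k β)) := by
  have hk := hC.pos
  have h0 : (β 0, x) ∈ a := by simpa using hC.mem 0 hk
  have hx : msMaxD (a.map Prod.snd) = x :=
    msMaxD_eq (mem_map_of_mem _ h0) fun _ hw =>
      let ⟨s, hs, hsw⟩ := mem_map.1 hw; hsw ▸ hC.le_top s hs
  have hb : msMaxD ((a.filter fun s => s.2 = x).map Prod.fst) = β 0 := by
    refine msMaxD_eq (mem_map.2 ⟨_, mem_filter.2 ⟨h0, rfl⟩, rfl⟩) ?_
    simp only [mem_map, mem_filter]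
    rintro _ ⟨s, ⟨hs, hsx⟩, rfl⟩
    exact hC.max_zero s.1 (hsx ▸ hs)
  have herase : a.erase (β 0, x) = a - chainSegs x 1 β := by
    simp [chainSegs, sub_singleton]
  obtain ⟨h1, h2⟩ := hC.chainAux_eq (card a) 1 one_pos hk
    (by rw [← herase]; exact card_erase_le)
  simp only [Nat.sub_self, Nat.cast_one] at h1 h2
  simp only [mwaStep, hx, hb, herase, h1, truncateIn, Prod.mk.injEq, and_true]
  refine ⟨by push_cast [Nat.cast_sub hk]; ring, ?_⟩
  rw [← h2, add_comm]
  simp [chainSegs]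

theorem IsMWChain.mem_chainSegs_sub_one (hC : IsMWChain a x k β) {p e : ℤ}
    (hs : (p, e) ∈ chainSegs x k β) (h : (p - 1, e - 1) ∈ a) :
    (p - 1, e - 1) ∈ chainSegs x k β := by
  obtain ⟨i, hi, rfl, rfl⟩ := mk_mem_chainSegs.1 hs
  have hik : i + 1 < k := by
    by_contra hik
    obtain rfl : i = k - 1 := by omega
    exact hC.terminal (β (k - 1) - 1) (by omega) (by convert h using 2; omega)
  have h1 := hC.max_succ i hik (β i - 1) (by omega) (by convert h using 2)
  have h2 := hC.anti i hik
  exact mk_mem_chainSegs.2 ⟨i + 1, hik, by omega, by push_cast; ring⟩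

theorem IsMWChain.mem_chainSegs_add_one (hC : IsMWChain a x k β) {p e : ℤ}
    (hs : (p, e) ∈ chainSegs x k β) (h : (p + 1, e) ∈ a) :
    (p + 1, e + 1) ∈ chainSegs x k β := by
  obtain ⟨t, ht, rfl, rfl⟩ := mk_mem_chainSegs.1 hs
  obtain ⟨i, rfl⟩ : ∃ i, t = i + 1 := by
    refine Nat.exists_eq_add_one.2 (Nat.pos_of_ne_zero fun h0 => ?_)
    subst h0
    have := hC.max_zero _ (by simpa using h)
    omega
  have h1 := hC.anti i ht
  have h2 : β i ≤ β (i + 1) + 1 := by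
    by_contra h2
    have := hC.max_succ i ht (β (i + 1) + 1) (by omega) (by convert h using 2; push_cast; ring)
    omega
  exact mk_mem_chainSegs.2 ⟨i, by omega, by omega, by push_cast; ring⟩

end MWChain

theorem validMS_mwaStep {a : Multiset (ℤ × ℤ)} (ha : ValidMS a) (h0 : a ≠ 0) :
    ValidMS (mwaStep a).2 := by
  obtain ⟨x, k, β, hC⟩ := exists_isMWChain h0
  rw [hC.mwaStep_eq]
  exact validMS_truncateIn ha _

theorem msSize_mwaStep_lt {a : Multiset (ℤ × ℤ)} (ha : ValidMS a) (h0 : a ≠ 0) :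
    msSize (mwaStep a).2 < msSize a := by
  obtain ⟨x, k, β, hC⟩ := exists_isMWChain h0
  have h := msSize_truncateIn ha (chainSegs_le hC.mem)
  rw [hC.mwaStep_eq]
  dsimp only
  rw [card_chainSegs] at h
  have := hC.pos
  omega

theorem mwaAux_congr :
    ∀ n m (a : Multiset (ℤ × ℤ)), ValidMS a → msSize a ≤ n → msSize a ≤ m →
      mwaAux n a = mwaAux m a := by
  intro n
  induction n with
  | zero =>
    intro m a ha hn _
    obtain rfl := eq_zero_of_msSize_eq_zero ha (Nat.le_zero.1 hn)
    cases m <;> simp [mwaAux]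
  | succ n ih =>
    intro m a ha hn hm
    rcases eq_or_ne a 0 with rfl | h0
    · cases m <;> simp [mwaAux]
    have hlt := msSize_mwaStep_lt ha h0
    obtain ⟨m, rfl⟩ : ∃ m', m = m' + 1 := Nat.exists_eq_add_one.2 (by omega)
    simp only [mwaAux, h0, if_false]
    rw [ih m _ (validMS_mwaStep ha h0) (by omega) (by omega)]

theorem MWA_unfold {a : Multiset (ℤ × ℤ)} (ha : ValidMS a) (h0 : a ≠ 0) :
    MWA a = (mwaStep a).1 ::ₘ MWA (mwaStep a).2 := by
  have hlt := msSize_mwaStep_lt ha h0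
  obtain ⟨n, hn⟩ : ∃ n, msSize a = n + 1 := Nat.exists_eq_add_one.2 (by omega)
  rw [MWA, hn]
  simp only [mwaAux, h0, if_false, MWA]
  rw [mwaAux_congr n _ _ (validMS_mwaStep ha h0) (by omega) le_rfl]

/-! ### The dual algorithm -/

def dualStep (a : Multiset (ℤ × ℤ)) : (ℤ × ℤ) × Multiset (ℤ × ℤ) :=
  Prod.map reflSeg reflMS (mwaStep (reflMS a))

def dualMWA (a : Multiset (ℤ × ℤ)) : Multiset (ℤ × ℤ) := reflMS (MWA (reflMS a))

theorem validMS_dualStep {a : Multiset (ℤ × ℤ)} (ha : ValidMS a) (h0 : a ≠ 0) :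
    ValidMS (dualStep a).2 :=
  validMS_reflMS (validMS_mwaStep (validMS_reflMS ha) (mt reflMS_eq_zero.1 h0))

theorem msSize_dualStep_lt {a : Multiset (ℤ × ℤ)} (ha : ValidMS a) (h0 : a ≠ 0) :
    msSize (dualStep a).2 < msSize a := by
  simpa [dualStep, msSize_reflMS] using
    msSize_mwaStep_lt (validMS_reflMS ha) (mt reflMS_eq_zero.1 h0)

theorem dualMWA_unfold {a : Multiset (ℤ × ℤ)} (ha : ValidMS a) (h0 : a ≠ 0) :
    dualMWA a = (dualStep a).1 ::ₘ dualMWA (dualStep a).2 := by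
  rw [dualMWA, MWA_unfold (validMS_reflMS ha) (mt reflMS_eq_zero.1 h0), reflMS_cons]
  simp [dualStep, dualMWA]

/-- The chain of one step of the dual algorithm: `ε j` is the end of its `j`-th segment,
whose beginning is `y + j`. -/
structure IsDualChain (a : Multiset (ℤ × ℤ)) (y : ℤ) (l : ℕ) (ε : ℕ → ℤ) : Prop where
  pos : 0 < l
  bot_le : ∀ s ∈ a, y ≤ s.1
  mem : ∀ j < l, (y + j, ε j) ∈ a
  mono : ∀ j, j + 1 < l → ε j < ε (j + 1)
  min_zero : ∀ e, (y, e) ∈ a → ε 0 ≤ e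
  min_succ : ∀ j, j + 1 < l → ∀ e, ε j < e → (y + j + 1, e) ∈ a → ε (j + 1) ≤ e
  terminal : ∀ e, ε (l - 1) < e → (y + l, e) ∉ a

section DualChain

variable {a : Multiset (ℤ × ℤ)} {y : ℤ} {l : ℕ} {ε : ℕ → ℤ}

theorem isMWChain_reflMS_iff :
    IsMWChain (reflMS a) (-y) l (fun j => -ε j) ↔ IsDualChain a y l ε := by
  constructor
  · intro hC
    refine ⟨hC.pos, fun s hs => ?_, fun j hj => ?_, fun j hj => ?_, fun e he => ?_,
      fun j hj e he hmem => ?_, fun e he hmem => ?_⟩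
    · have := hC.le_top (reflSeg s) (mem_reflMS.2 (by simpa using hs))
      simp only [reflSeg] at this
      omega
    · convert mk_mem_reflMS.1 (hC.mem j hj) using 2 <;> ring
    · have := hC.anti j hj
      omega
    · have := hC.max_zero (-e) (mk_mem_reflMS.2 (by simpa using he))
      omega
    · have := hC.max_succ j hj (-e) (by omega)
        (mk_mem_reflMS.2 (by convert hmem using 2 <;> ring))
      omega
    · exact hC.terminal (-e) (by omega) (mk_mem_reflMS.2 (by convert hmem using 2 <;> ring))
  · intro hD
    refine ⟨⟨hD.pos, fun s hs => ?_, fun j hj => mk_mem_reflMS.2 ?_, fun j hj => ?_,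
      fun p hp => ?_, fun j hj p hp hmem => ?_⟩, fun p hp hmem => ?_⟩
    · have := hD.bot_le (reflSeg s) (mem_reflMS.1 hs)
      simp only [reflSeg] at this
      omega
    · convert hD.mem j hj using 2 <;> ring
    · have := hD.mono j hj
      omega
    · have := hD.min_zero (-p) (by simpa using mk_mem_reflMS.1 hp)
      omega
    · have := hD.min_succ j hj (-p) (by omega)
        (by convert mk_mem_reflMS.1 hmem using 2; ring)
      omega
    · exact hD.terminal (-p) (by omega) (by convert mk_mem_reflMS.1 hmem using 2; ring)

theorem isDualChain_reflMS_iff {x : ℤ} {k : ℕ} {β : ℕ → ℤ} :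
    IsDualChain (reflMS a) (-x) k (fun i => -β i) ↔ IsMWChain a x k β := by
  simpa using (isMWChain_reflMS_iff (a := reflMS a) (y := -x) (ε := fun i => -β i)).symm

theorem exists_isDualChain (h0 : a ≠ 0) : ∃ y l ε, IsDualChain a y l ε := by
  obtain ⟨x, k, β, hC⟩ := exists_isMWChain (mt reflMS_eq_zero.1 h0)
  exact ⟨-x, k, fun j => -β j, isMWChain_reflMS_iff.1 (by simpa using hC)⟩

theorem IsDualChain.dualStep_eq (hD : IsDualChain a y l ε) :
    dualStep a = ((y, y + l - 1), truncateFirstIn a (dualChainSegs y l ε)) := by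
  rw [dualStep, (isMWChain_reflMS_iff.2 hD).mwaStep_eq, ← reflMS_dualChainSegs]
  simp only [Prod.map, reflSeg, reflMS_truncateIn, reflMS_reflMS]
  congr 2 <;> ring

end DualChain

/-! ### The degenerate case -/

section Degenerate

variable {a : Multiset (ℤ × ℤ)} {x y : ℤ} {k l : ℕ} {β ε : ℕ → ℤ}

/-- The dual chain through a point `[z, z]` consists of the points `[y], …, [z]`, and the chain
through `[z, z]` then descends along them. -/
theorem mem_chainSegs_bot_of_point (ha : ValidMS a) (hC : IsMWChain a x k β)
    (hD : IsDualChain a y l ε) {z : ℤ} (hzS : (z, z) ∈ chainSegs x k β)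
    (hzD : (z, z) ∈ dualChainSegs y l ε) : (y, y) ∈ chainSegs x k β := by
  obtain ⟨j, hj, rfl, hεj⟩ := mk_mem_dualChainSegs.1 hzD
  suffices h : ∀ r ≤ j, ε r = y + r ∧ (y + r, y + r) ∈ chainSegs x k β by
    simpa using (h 0 (Nat.zero_le _)).2
  intro r hr
  refine Nat.decreasingInduction
    (motive := fun r _ => ε r = y + r ∧ (y + r, y + r) ∈ chainSegs x k β)
    (fun r hr ih => ?_) ⟨hεj, hzS⟩ hr
  have hmono := hD.mono r (by omega)
  have hval := ha _ (hD.mem r (by omega))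
  push_cast at ih hval
  have hεr : ε r = y + r := by omega
  refine ⟨hεr, ?_⟩
  have := hC.mem_chainSegs_sub_one ih.2 (by convert hD.mem r (by omega) using 2 <;> omega)
  convert this using 2 <;> ring

theorem mem_chainSegs_bot_of_top (ha : ValidMS a) (hC : IsMWChain a x k β)
    (hD : IsDualChain a y l ε) (h : (x, x) ∈ dualChainSegs y l ε) :
    (y, y) ∈ chainSegs x k β := by
  have h0 := hC.max_zero x (mem_of_le (dualChainSegs_le hD.mem) h)
  have h0' := ha _ (hC.mem 0 hC.pos)
  simp only [Nat.cast_zero, sub_zero] at h0'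
  exact mem_chainSegs_bot_of_point ha hC hD
    (mk_mem_chainSegs.2 ⟨0, hC.pos, by omega, by simp⟩) h

theorem IsMWChain.eq_of_bot_mem (ha : ValidMS a) (hC : IsMWChain a x k β)
    (hy : ∀ s ∈ a, y ≤ s.1) (hdeg : (y, y) ∈ chainSegs x k β) :
    x = y + k - 1 ∧ ∀ i < k, β i = x - i := by
  obtain ⟨i₀, hi₀, hβ, hx⟩ := mk_mem_chainSegs.1 hdeg
  obtain rfl : i₀ = k - 1 := by
    by_contra hne
    have h1 := hC.anti i₀ (by omega)
    have h2 := hy _ (hC.mem (i₀ + 1) (by omega))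
    simp only at h2
    omega
  refine ⟨by omega, fun i hi => ?_⟩
  have hval := ha _ (hC.mem i hi)
  simp only at hval
  suffices x - i ≤ β i by omega
  refine Nat.decreasingInduction (motive := fun i _ => x - i ≤ β i) (fun i hi ih => ?_)
    (by omega) (Nat.le_sub_one_of_lt hi)
  have := hC.anti i (by omega)
  push_cast at ih
  omega

theorem dualStep_eq_mwaStep_of_degenerate (ha : ValidMS a) (hC : IsMWChain a x k β)
    (hy : ∀ s ∈ a, y ≤ s.1) (hdeg : (y, y) ∈ chainSegs x k β) : dualStep a = mwaStep a := by
  obtain ⟨hx, hβ⟩ := hC.eq_of_bot_mem ha hy hdeg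
  have hk := hC.pos
  have hD : IsDualChain a y k fun j => y + j := by
    refine ⟨hk, hy, fun j hj => ?_, fun j _ => by push_cast; omega, fun e he => ?_,
      fun j _ e _ he => ?_, fun e _ he => ?_⟩
    · have := hC.mem (k - 1 - j) (by omega)
      rwa [hβ _ (by omega), show x - ((k - 1 - j : ℕ) : ℤ) = y + j by omega] at this
    · simpa using ha _ he
    · have := ha _ he
      push_cast
      simp only at this
      omega
    · have := hC.le_top _ he
      simp only at this
      omega
  have hSD : dualChainSegs y k (fun j => y + j) = chainSegs x k β := by
    refine (Nodup.ext (nodup_dualChainSegs _ _ _) (nodup_chainSegs _ _ _)).2 fun ⟨p, q⟩ => ?_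
    rw [mk_mem_dualChainSegs, mk_mem_chainSegs]
    constructor
    · rintro ⟨j, hj, rfl, rfl⟩
      exact ⟨k - 1 - j, by omega, by rw [hβ _ (by omega)]; omega, by omega⟩
    · rintro ⟨i, hi, rfl, rfl⟩
      exact ⟨k - 1 - i, by omega, by rw [hβ _ hi]; omega, by omega⟩
  have hpts : ∀ s ∈ chainSegs x k β, s.1 = s.2 := fun ⟨p, q⟩ hs => by
    obtain ⟨i, hi, rfl, rfl⟩ := mk_mem_chainSegs.1 hs
    exact hβ i hi
  rw [hD.dualStep_eq, hC.mwaStep_eq, hSD, truncateIn, truncateFirstIn,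
    bind_truncate_eq_zero hpts, bind_truncateFirst_eq_zero hpts]
  congr 2 <;> omega

end Degenerate

/-! ### The two steps commute -/

/-- The ends of the dual chain once the segments of `S` have lost their last point. -/
def lowerEnds (S : Multiset (ℤ × ℤ)) (y : ℤ) (ε : ℕ → ℤ) (j : ℕ) : ℤ :=
  ε j - if (y + j, ε j) ∈ S then 1 else 0

/-- The beginnings of the chain once the segments of `D` have lost their first point. -/
def raiseBegs (D : Multiset (ℤ × ℤ)) (x : ℤ) (β : ℕ → ℤ) (i : ℕ) : ℤ :=
  β i + if (β i, x - i) ∈ D then 1 else 0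

section LowerEnds

variable {S : Multiset (ℤ × ℤ)} {y : ℤ} {ε : ℕ → ℤ} {j : ℕ}

theorem lowerEnds_of_mem (h : (y + j, ε j) ∈ S) : lowerEnds S y ε j = ε j - 1 := by
  simp [lowerEnds, h]

theorem lowerEnds_of_not_mem (h : (y + j, ε j) ∉ S) : lowerEnds S y ε j = ε j := by
  simp [lowerEnds, h]

theorem lowerEnds_le (S : Multiset (ℤ × ℤ)) (y : ℤ) (ε : ℕ → ℤ) (j : ℕ) :
    lowerEnds S y ε j ≤ ε j := by
  unfold lowerEnds
  split_ifs <;> omega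

theorem sub_one_le_lowerEnds (S : Multiset (ℤ × ℤ)) (y : ℤ) (ε : ℕ → ℤ) (j : ℕ) :
    ε j - 1 ≤ lowerEnds S y ε j := by
  unfold lowerEnds
  split_ifs <;> omega

end LowerEnds

theorem lowerEnds_reflMS (D : Multiset (ℤ × ℤ)) (x : ℤ) (β : ℕ → ℤ) :
    lowerEnds (reflMS D) (-x) (fun i => -β i) = fun i => -raiseBegs D x β i := by
  funext i
  have h : (-x + i, -β i) ∈ reflMS D ↔ (β i, x - i) ∈ D := by
    rw [mk_mem_reflMS, neg_neg, show -(-x + (i : ℤ)) = x - i by ring]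
  simp only [lowerEnds, raiseBegs, h]
  split_ifs <;> ring

theorem chainSegs_raiseBegs (D : Multiset (ℤ × ℤ)) (x : ℤ) (k : ℕ) (β : ℕ → ℤ) :
    chainSegs x k (raiseBegs D x β) =
      (chainSegs x k β).map fun s => if s ∈ D then (s.1 + 1, s.2) else s := by
  simp only [chainSegs, map_map, Function.comp_def]
  refine map_congr rfl fun i _ => ?_
  simp only [raiseBegs]
  split_ifs <;> simp

theorem dualChainSegs_lowerEnds (S : Multiset (ℤ × ℤ)) (y : ℤ) (l : ℕ) (ε : ℕ → ℤ) :
    dualChainSegs y l (lowerEnds S y ε) =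
      (dualChainSegs y l ε).map fun s => if s ∈ S then (s.1, s.2 - 1) else s := by
  simp only [dualChainSegs, map_map, Function.comp_def]
  refine map_congr rfl fun j _ => ?_
  simp only [lowerEnds]
  split_ifs <;> simp

/-- `Sh` are the segments on both chains, `U` and `U'` those on only one of them. -/
theorem truncations_add_comm_split (Sh U U' : Multiset (ℤ × ℤ))
    (hSh : ∀ s ∈ Sh, s.1 < s.2) :
    (Sh + U).bind truncate +
        (Sh.map (fun s : ℤ × ℤ => (s.1, s.2 - 1)) + U').bind truncateFirst +
        (Sh + U') + (Sh.map (fun s : ℤ × ℤ => (s.1 + 1, s.2)) + U) =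
      (Sh + U) + (Sh.map (fun s : ℤ × ℤ => (s.1, s.2 - 1)) + U') +
        (Sh + U').bind truncateFirst +
        (Sh.map (fun s : ℤ × ℤ => (s.1 + 1, s.2)) + U).bind truncate := by
  have e1 : Sh.bind truncate = Sh.map fun s : ℤ × ℤ => (s.1, s.2 - 1) := by
    rw [← bind_singleton]
    exact bind_congr fun s hs => by rw [truncate, if_pos (by have := hSh s hs; omega)]
  have e2 : Sh.bind truncateFirst = Sh.map fun s : ℤ × ℤ => (s.1 + 1, s.2) := by
    rw [← bind_singleton]
    exact bind_congr fun s hs => by rw [truncateFirst, if_pos (by have := hSh s hs; omega)]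
  have e3 : (Sh.map fun s : ℤ × ℤ => (s.1, s.2 - 1)).bind truncateFirst =
      (Sh.map fun s : ℤ × ℤ => (s.1 + 1, s.2)).bind truncate := by
    simp only [Multiset.bind_map, truncate, truncateFirst]
  rw [add_bind, add_bind, add_bind, add_bind, e1, e2, e3]
  abel

theorem truncations_add_comm {S D : Multiset (ℤ × ℤ)} (hS : S.Nodup) (hD : D.Nodup)
    (hSD : ∀ s ∈ S, s ∈ D → s.1 < s.2) :
    S.bind truncate +
        (D.map fun s => if s ∈ S then (s.1, s.2 - 1) else s).bind truncateFirst + D +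
        S.map (fun s => if s ∈ D then (s.1 + 1, s.2) else s) =
      S + D.map (fun s => if s ∈ S then (s.1, s.2 - 1) else s) + D.bind truncateFirst +
        (S.map fun s => if s ∈ D then (s.1 + 1, s.2) else s).bind truncate := by
  set Sh := S.filter (· ∈ D)
  have hS' : S = Sh + S.filter (· ∉ D) := (filter_add_not _ _).symm
  have hD' : D = Sh + D.filter (· ∉ S) := by
    conv_lhs => rw [← filter_add_not (· ∈ S) D]
    congr 1
    exact (Nodup.ext (hD.filter _) (hS.filter _)).2 fun s => by simp [and_comm]
  have hmapS : (S.map fun s => if s ∈ D then (s.1 + 1, s.2) else s) =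
      Sh.map (fun s : ℤ × ℤ => (s.1 + 1, s.2)) + S.filter (· ∉ D) := by
    conv_lhs => rw [hS']
    rw [map_add, map_congr rfl fun s hs => if_pos (mem_filter.1 hs).2,
      map_congr rfl fun s hs => if_neg (mem_filter.1 hs).2, map_id']
  have hmapD : (D.map fun s => if s ∈ S then (s.1, s.2 - 1) else s) =
      Sh.map (fun s : ℤ × ℤ => (s.1, s.2 - 1)) + D.filter (· ∉ S) := by
    conv_lhs => rw [hD']
    rw [map_add, map_congr rfl fun s hs => if_pos (mem_filter.1 hs).1,
      map_congr rfl fun s hs => if_neg (mem_filter.1 hs).2, map_id']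
  have h := truncations_add_comm_split Sh (S.filter (· ∉ D)) (D.filter (· ∉ S))
    fun s hs => hSD s (mem_filter.1 hs).1 (mem_filter.1 hs).2
  rwa [← hmapS, ← hmapD, ← hS', ← hD'] at h

theorem truncateFirstIn_truncateIn_comm {a S D : Multiset (ℤ × ℤ)} (hS : S.Nodup) (hD : D.Nodup)
    (hSa : S ≤ a) (hDa : D ≤ a) (hSD : ∀ s ∈ S, s ∈ D → s.1 < s.2)
    (hD' : D.map (fun s => if s ∈ S then (s.1, s.2 - 1) else s) ≤ truncateIn a S)
    (hS' : S.map (fun s => if s ∈ D then (s.1 + 1, s.2) else s) ≤ truncateFirstIn a D) :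
    truncateFirstIn (truncateIn a S) (D.map fun s => if s ∈ S then (s.1, s.2 - 1) else s) =
      truncateIn (truncateFirstIn a D) (S.map fun s => if s ∈ D then (s.1 + 1, s.2) else s) := by
  ext v
  have h := congrArg (count v) (truncations_add_comm hS hD hSD)
  have h1 := count_le_of_le v hSa
  have h2 := count_le_of_le v hDa
  have h3 := count_le_of_le v hD'
  have h4 := count_le_of_le v hS'
  simp only [truncateIn, truncateFirstIn, count_add, count_sub] at h h3 h4 ⊢
  omega

section AfterStep

variable {a : Multiset (ℤ × ℤ)} {x y : ℤ} {k l : ℕ} {β ε : ℕ → ℤ}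

theorem lowerEnds_mem_truncateIn (ha : ValidMS a) (hC : IsMWChain a x k β)
    (hD : IsDualChain a y l ε) (hnd : (y, y) ∉ chainSegs x k β) {j : ℕ} (hj : j < l) :
    (y + j, lowerEnds (chainSegs x k β) y ε j) ∈ truncateIn a (chainSegs x k β) := by
  by_cases h : (y + j, ε j) ∈ chainSegs x k β
  · rw [lowerEnds_of_mem h]
    -- a shared segment is not a point, so its truncation survives
    refine mem_truncateIn_of_lt h (lt_of_le_of_ne (ha _ (hD.mem j hj)) fun heq => hnd ?_)
    have hD' : (y + j, ε j) ∈ dualChainSegs y l ε := mk_mem_dualChainSegs.2 ⟨j, hj, rfl, rfl⟩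
    rw [← heq] at h hD'
    exact mem_chainSegs_bot_of_point ha hC hD h hD'
  · rw [lowerEnds_of_not_mem h]
    exact mem_truncateIn_of_mem (hD.mem j hj) h

theorem lowerEnds_lt_succ (hC : IsMWChain a x k β) (hD : IsDualChain a y l ε) {j : ℕ}
    (hj : j + 1 < l) :
    lowerEnds (chainSegs x k β) y ε j < lowerEnds (chainSegs x k β) y ε (j + 1) := by
  have hlt := hD.mono j hj
  have hle := lowerEnds_le (chainSegs x k β) y ε j
  by_cases h1 : (y + ↑(j + 1), ε (j + 1)) ∈ chainSegs x k β
  · rw [lowerEnds_of_mem h1]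
    by_cases h0 : (y + j, ε j) ∈ chainSegs x k β
    · rw [lowerEnds_of_mem h0]
      omega
    · rw [lowerEnds_of_not_mem h0]
      by_contra hcon
      have h0' := hC.mem_chainSegs_sub_one h1
        (by convert hD.mem j (by omega) using 2 <;> push_cast <;> omega)
      exact h0 (by convert h0' using 2 <;> push_cast <;> omega)
  · rw [lowerEnds_of_not_mem h1]
    omega

theorem lowerEnds_zero_le (hC : IsMWChain a x k β) (hD : IsDualChain a y l ε) {e : ℤ}
    (he : (y, e) ∈ truncateIn a (chainSegs x k β)) : lowerEnds (chainSegs x k β) y ε 0 ≤ e := by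
  have hle := lowerEnds_le (chainSegs x k β) y ε 0
  rcases mem_or_of_mem_truncateIn he with h | h
  · exact hle.trans (hD.min_zero e h)
  · have := hD.min_zero _ (mem_of_le (chainSegs_le hC.mem) h)
    by_cases heq : ε 0 = e + 1
    · rw [lowerEnds_of_mem (by simpa [heq] using h)]
      omega
    · omega

theorem lowerEnds_succ_le (hC : IsMWChain a x k β) (hD : IsDualChain a y l ε) {j : ℕ}
    (hj : j + 1 < l) {e : ℤ} (he : lowerEnds (chainSegs x k β) y ε j < e)
    (hmem : (y + j + 1, e) ∈ truncateIn a (chainSegs x k β)) :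
    lowerEnds (chainSegs x k β) y ε (j + 1) ≤ e := by
  have hle := lowerEnds_le (chainSegs x k β) y ε (j + 1)
  have hmono := hD.mono j hj
  have hcast : y + ((j + 1 : ℕ) : ℤ) = y + j + 1 := by push_cast; ring
  rcases mem_or_of_mem_truncateIn hmem with h | h
  · by_cases hlt : ε j < e
    · exact hle.trans (hD.min_succ j hj e hlt h)
    have h0 : (y + j, ε j) ∈ chainSegs x k β := by
      by_contra h0
      rw [lowerEnds_of_not_mem h0] at he
      exact hlt he
    obtain rfl : e = ε j := by
      rw [lowerEnds_of_mem h0] at he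
      omega
    have h1 := hC.mem_chainSegs_add_one h0 h
    have := hD.min_succ j hj _ (by omega) (mem_of_le (chainSegs_le hC.mem) h1)
    rw [lowerEnds_of_mem (by rw [hcast, show ε (j + 1) = ε j + 1 by omega]; exact h1)]
    omega
  · have := sub_one_le_lowerEnds (chainSegs x k β) y ε j
    have := hD.min_succ j hj (e + 1) (by omega) (mem_of_le (chainSegs_le hC.mem) h)
    by_cases heq : ε (j + 1) = e + 1
    · rw [lowerEnds_of_mem (by rw [hcast, heq]; exact h)]
      omega
    · omega

theorem lowerEnds_terminal (hC : IsMWChain a x k β) (hD : IsDualChain a y l ε) {e : ℤ}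
    (he : lowerEnds (chainSegs x k β) y ε (l - 1) < e) :
    (y + l, e) ∉ truncateIn a (chainSegs x k β) := by
  intro hmem
  have hcast : y + ((l - 1 : ℕ) : ℤ) + 1 = y + l := by have := hD.pos; omega
  rcases mem_or_of_mem_truncateIn hmem with h | h
  · by_cases hlt : ε (l - 1) < e
    · exact hD.terminal e hlt h
    have h0 : (y + ↑(l - 1), ε (l - 1)) ∈ chainSegs x k β := by
      by_contra h0
      rw [lowerEnds_of_not_mem h0] at he
      exact hlt he
    obtain rfl : e = ε (l - 1) := by
      rw [lowerEnds_of_mem h0] at he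
      omega
    have h1 := hC.mem_chainSegs_add_one h0 (by rwa [hcast])
    exact hD.terminal _ (lt_add_one _)
      (by rw [← hcast]; exact mem_of_le (chainSegs_le hC.mem) h1)
  · have := sub_one_le_lowerEnds (chainSegs x k β) y ε (l - 1)
    exact hD.terminal (e + 1) (by omega) (mem_of_le (chainSegs_le hC.mem) h)

theorem IsDualChain.truncateIn_chainSegs (ha : ValidMS a) (hC : IsMWChain a x k β)
    (hD : IsDualChain a y l ε) (hnd : (y, y) ∉ chainSegs x k β) :
    IsDualChain (truncateIn a (chainSegs x k β)) y l (lowerEnds (chainSegs x k β) y ε) where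
  pos := hD.pos
  bot_le := fun ⟨p, q⟩ hs => (mem_or_of_mem_truncateIn hs).elim (hD.bot_le _)
    fun h => hD.bot_le (p, q + 1) (mem_of_le (chainSegs_le hC.mem) h)
  mem := fun _ hj => lowerEnds_mem_truncateIn ha hC hD hnd hj
  mono := fun _ hj => lowerEnds_lt_succ hC hD hj
  min_zero := fun _ he => lowerEnds_zero_le hC hD he
  min_succ := fun _ hj _ he hmem => lowerEnds_succ_le hC hD hj he hmem
  terminal := fun _ he => lowerEnds_terminal hC hD he

theorem IsMWChain.truncateFirstIn_dualChainSegs (ha : ValidMS a) (hC : IsMWChain a x k β)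
    (hD : IsDualChain a y l ε) (hnd : (y, y) ∉ chainSegs x k β) :
    IsMWChain (truncateFirstIn a (dualChainSegs y l ε)) x k
      (raiseBegs (dualChainSegs y l ε) x β) := by
  have hnd' : (-x, -x) ∉ chainSegs (-y) l fun j => -ε j := by
    rw [← reflMS_dualChainSegs, mk_mem_reflMS, neg_neg]
    exact fun h => hnd (mem_chainSegs_bot_of_top ha hC hD h)
  have h := IsDualChain.truncateIn_chainSegs (validMS_reflMS ha) (isMWChain_reflMS_iff.2 hD)
    (isDualChain_reflMS_iff.2 hC) hnd'
  rw [← reflMS_dualChainSegs, ← reflMS_truncateFirstIn, lowerEnds_reflMS] at h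
  exact isDualChain_reflMS_iff.1 h

theorem truncateFirstIn_truncateIn_chainSegs_comm (ha : ValidMS a) (hC : IsMWChain a x k β)
    (hD : IsDualChain a y l ε) (hnd : (y, y) ∉ chainSegs x k β) :
    truncateFirstIn (truncateIn a (chainSegs x k β))
        (dualChainSegs y l (lowerEnds (chainSegs x k β) y ε)) =
      truncateIn (truncateFirstIn a (dualChainSegs y l ε))
        (chainSegs x k (raiseBegs (dualChainSegs y l ε) x β)) := by
  have hD' := dualChainSegs_le (hD.truncateIn_chainSegs ha hC hnd).mem
  have hC' := chainSegs_le (hC.truncateFirstIn_dualChainSegs ha hD hnd).mem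
  rw [dualChainSegs_lowerEnds] at hD' ⊢
  rw [chainSegs_raiseBegs] at hC' ⊢
  refine truncateFirstIn_truncateIn_comm (nodup_chainSegs _ _ _) (nodup_dualChainSegs _ _ _)
    (chainSegs_le hC.mem) (dualChainSegs_le hD.mem) (fun ⟨p, q⟩ hS hD'' => ?_) hD' hC'
  refine lt_of_le_of_ne (ha _ (mem_of_le (chainSegs_le hC.mem) hS)) fun (hpq : p = q) => hnd ?_
  subst hpq
  exact mem_chainSegs_bot_of_point ha hC hD hS hD''

end AfterStep

theorem dualStep_eq_mwaStep_or_comm {a : Multiset (ℤ × ℤ)} (ha : ValidMS a) (h0 : a ≠ 0) :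
    dualStep a = mwaStep a ∨
      (mwaStep a).2 ≠ 0 ∧ (dualStep a).2 ≠ 0 ∧
        mwaStep (dualStep a).2 = ((mwaStep a).1, (dualStep (mwaStep a).2).2) ∧
        (dualStep (mwaStep a).2).1 = (dualStep a).1 := by
  obtain ⟨x, k, β, hC⟩ := exists_isMWChain h0
  obtain ⟨y, l, ε, hD⟩ := exists_isDualChain h0
  by_cases hdeg : (y, y) ∈ chainSegs x k β
  · exact Or.inl (dualStep_eq_mwaStep_of_degenerate ha hC hD.bot_le hdeg)
  have hD' := hD.truncateIn_chainSegs ha hC hdeg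
  have hC' := hC.truncateFirstIn_dualChainSegs ha hD hdeg
  rw [hC.mwaStep_eq, hD.dualStep_eq, hC'.mwaStep_eq, hD'.dualStep_eq,
    truncateFirstIn_truncateIn_chainSegs_comm ha hC hD hdeg]
  exact Or.inr ⟨ne_of_mem_of_not_mem' (hD'.mem 0 hD.pos) (notMem_zero _),
    ne_of_mem_of_not_mem' (hC'.mem 0 hC.pos) (notMem_zero _), rfl, rfl⟩

theorem MWA_eq_dualMWA (a : Multiset (ℤ × ℤ)) (ha : ValidMS a) : MWA a = dualMWA a := by
  induction h : msSize a using Nat.strong_induction_on generalizing a with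
  | _ n ih =>
  have ih' : ∀ b, ValidMS b → msSize b < msSize a → MWA b = dualMWA b :=
    fun b hb hlt => ih _ (h ▸ hlt) b hb rfl
  rcases eq_or_ne a 0 with rfl | h0
  · rfl
  have ha' := validMS_mwaStep ha h0
  have hb := validMS_dualStep ha h0
  have hsa' := msSize_mwaStep_lt ha h0
  have hsb := msSize_dualStep_lt ha h0
  rcases dualStep_eq_mwaStep_or_comm ha h0 with heq | ⟨ha'0, hb0, hstep_b, hstep_a'⟩
  · rw [MWA_unfold ha h0, dualMWA_unfold ha h0, heq, ih' _ ha' hsa']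
  calc MWA a = (mwaStep a).1 ::ₘ dualMWA (mwaStep a).2 := by
        rw [MWA_unfold ha h0, ih' _ ha' hsa']
    _ = (mwaStep a).1 ::ₘ (dualStep a).1 ::ₘ MWA (dualStep (mwaStep a).2).2 := by
      rw [dualMWA_unfold ha' ha'0, hstep_a', ih' _ (validMS_dualStep ha' ha'0)
        ((msSize_dualStep_lt ha' ha'0).trans hsa')]
    _ = (dualStep a).1 ::ₘ (mwaStep a).1 ::ₘ MWA (dualStep (mwaStep a).2).2 := cons_swap _ _ _
    _ = (dualStep a).1 ::ₘ MWA (dualStep a).2 := by rw [MWA_unfold hb hb0, hstep_b]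
    _ = dualMWA a := by rw [ih' _ hb hsb, dualMWA_unfold ha h0]

end MoeglinWaldspurger

theorem mwa_commutes_with_reflection
    (a : Multiset (ℤ × ℤ)) (ha : ValidMS a) :
    MWA (reflMS a) = reflMS (MWA a) := by
  rw [MoeglinWaldspurger.MWA_eq_dualMWA a ha, MoeglinWaldspurger.dualMWA,
    MoeglinWaldspurger.reflMS_reflMS]
end
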